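/- arXiv:2512.15272 — 6 statements merged into one kernel-verified Lean document; each statement's English description precedes it below -/
import Mathlib

section
/- The dimension of the fused permutations algebra H_{k,n} equals the sum over i from 0 to min(k,n) of binom(n,i)^2 * (n-i)!. -/
open Finset

namespace FusedPermAux

/-- The condition characterizing the function part of a fused permutation. -/
def cond (n k : ℕ) (f : Fin n → Fin (n + 1)) : Prop :=
  (Finset.univ.val.map f).count 0 ≤ k ∧
    ∀ a : Fin (n + 1), a ≠ 0 → (Finset.univ.val.map f).count a ≤ 1

instance (n k : ℕ) : DecidablePred (cond n k) := fun f => by unfold cond; infer_instance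

/-- The total multiset: `k` copies of `0` and one copy of everything else. -/
def M (n k : ℕ) : Multiset (Fin (n + 1)) :=
  Multiset.replicate k 0 + (Finset.univ.erase (0 : Fin (n + 1))).val

lemma count_M (n k : ℕ) (a : Fin (n + 1)) :
    (M n k).count a = if a = 0 then k else 1 := by
  rw [M, Multiset.count_add, Multiset.count_replicate, Finset.erase_val]
  by_cases h : a = 0
  · subst h
    rw [if_pos rfl, if_pos rfl, Multiset.count_eq_zero_of_notMem
      (Multiset.Nodup.notMem_erase Finset.univ.nodup), Nat.add_zero]
  · rw [if_neg h, if_neg (fun hh => h hh.symm), Multiset.count_eq_one_of_mem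
      (Multiset.Nodup.erase _ Finset.univ.nodup)
      ((Multiset.mem_erase_of_ne h).2 (Finset.mem_univ_val a)), Nat.zero_add]

lemma card_M (n k : ℕ) : Multiset.card (M n k) = k + n := by
  have : ((Finset.univ.erase (0 : Fin (n + 1))).val).card = n := by
    rw [← Finset.card_def, Finset.card_erase_of_mem (Finset.mem_univ _), Finset.card_univ,
      Fintype.card_fin]
    omega
  simp [M, this]

lemma map_le_M {n k : ℕ} {f : Fin n → Fin (n + 1)} (h : cond n k f) :
    Finset.univ.val.map f ≤ M n k := by
  rw [Multiset.le_iff_count]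
  intro a
  rw [count_M]
  by_cases ha : a = 0
  · rw [if_pos ha, ha]; exact h.1
  · rw [if_neg ha]; exact h.2 a ha

lemma card_map_univ (n : ℕ) (f : Fin n → Fin (n + 1)) :
    Multiset.card (Finset.univ.val.map f) = n := by
  rw [Multiset.card_map, ← Finset.card_def, Finset.card_univ, Fintype.card_fin]

def equiv1 (n k : ℕ) :
    {p : Multiset (Fin (n + 1)) × (Fin n → Fin (n + 1)) //
        Multiset.card p.1 = k ∧
        (p.1 + Finset.univ.val.map p.2).count 0 = k ∧
        ∀ a : Fin (n + 1), a ≠ 0 → (p.1 + Finset.univ.val.map p.2).count a = 1} ≃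
      {f : Fin n → Fin (n + 1) // cond n k f} where
  toFun p := ⟨p.1.2, by
    obtain ⟨⟨S, f⟩, hcard, h0, h1⟩ := p
    constructor
    · calc (Finset.univ.val.map f).count 0 ≤ (S + Finset.univ.val.map f).count 0 :=
        Multiset.count_le_of_le _ (Multiset.le_add_left _ _)
      _ = k := h0
    · intro a ha
      calc (Finset.univ.val.map f).count a ≤ (S + Finset.univ.val.map f).count a :=
        Multiset.count_le_of_le _ (Multiset.le_add_left _ _)
      _ = 1 := h1 a ha⟩
  invFun f := ⟨(M n k - Finset.univ.val.map f.1, f.1), by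
    have hle := map_le_M f.2
    have hM : M n k - Finset.univ.val.map f.1 + Finset.univ.val.map f.1 = M n k :=
      tsub_add_cancel_of_le hle
    refine ⟨?_, ?_, ?_⟩
    · rw [Multiset.card_sub hle, card_M, card_map_univ, Nat.add_sub_cancel]
    · rw [hM, count_M, if_pos rfl]
    · intro a ha
      rw [hM, count_M, if_neg ha]⟩
  left_inv p := by
    obtain ⟨⟨S, f⟩, hcard, h0, h1⟩ := p
    have hsum : S + Finset.univ.val.map f = M n k := by
      ext a
      rw [count_M]
      by_cases ha : a = 0
      · rw [if_pos ha, ha]; exact h0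
      · rw [if_neg ha]; exact h1 a ha
    apply Subtype.ext
    apply Prod.ext
    · show M n k - Finset.univ.val.map f = S
      rw [← hsum, add_tsub_cancel_right]
    · rfl
  right_inv f := rfl

/-- Support of the function part. -/
def suppF (n k : ℕ) (f : {f : Fin n → Fin (n + 1) // cond n k f}) : Finset (Fin n) :=
  Finset.univ.filter (fun x => f.1 x ≠ 0)

lemma count_map_univ (n : ℕ) (f : Fin n → Fin (n + 1)) (a : Fin (n + 1)) :
    (Finset.univ.val.map f).count a = (Finset.univ.filter (fun x => f x = a)).card := by
  rw [Multiset.count_map, Finset.card_def, Finset.filter_val,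
    Multiset.filter_congr (fun x _ => (eq_comm : a = f x ↔ f x = a))]

end FusedPermAux

namespace FusedPermAux

lemma card_nz (n : ℕ) : Fintype.card {a : Fin (n + 1) // a ≠ 0} = n := by
  simp [Fintype.card_subtype_compl]

lemma supp_mem {n k : ℕ} {f : {f : Fin n → Fin (n + 1) // cond n k f}} {x : Fin n}
    (hx : x ∈ suppF n k f) : f.1 x ≠ 0 := by
  simpa [suppF] using hx

def fiberEquiv (n k : ℕ) (s : Finset (Fin n)) (hs : n - k ≤ s.card) :
    {f : {f : Fin n → Fin (n + 1) // cond n k f} // suppF n k f = s} ≃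
      (↥s ↪ {a : Fin (n + 1) // a ≠ 0}) where
  toFun f := ⟨fun x => ⟨f.1.1 x.1, supp_mem (f.2.symm ▸ x.2)⟩, by
    intro x y hxy
    have hval : f.1.1 x.1 = f.1.1 y.1 := congrArg Subtype.val hxy
    have hane : f.1.1 x.1 ≠ 0 := supp_mem (f.2.symm ▸ x.2)
    have hcount := f.1.2.2 _ hane
    rw [count_map_univ] at hcount
    have hx : (x : Fin n) ∈ Finset.univ.filter (fun z => f.1.1 z = f.1.1 x.1) := by
      simp
    have hy : (y : Fin n) ∈ Finset.univ.filter (fun z => f.1.1 z = f.1.1 x.1) := by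
      simp [hval.symm]
    exact Subtype.ext (Finset.card_le_one.1 hcount _ hx _ hy)⟩
  invFun e := ⟨⟨fun x => if hx : x ∈ s then (e ⟨x, hx⟩).1 else 0, by
      constructor
      · rw [count_map_univ]
        have hfil : (Finset.univ.filter
            (fun x => (if hx : x ∈ s then (e ⟨x, hx⟩).1 else 0) = 0)) = sᶜ := by
          ext x
          by_cases hx : x ∈ s
          · simp [hx, (e ⟨x, hx⟩).2]
          · simp [hx]
        rw [hfil, Finset.card_compl, Fintype.card_fin]
        have := Finset.card_le_univ s
        rw [Fintype.card_fin] at this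
        omega
      · intro a ha
        rw [count_map_univ]
        refine Finset.card_le_one.2 fun x hx y hy => ?_
        rw [Finset.mem_filter] at hx hy
        by_cases hxs : x ∈ s
        · by_cases hys : y ∈ s
          · rw [dif_pos hxs] at hx
            rw [dif_pos hys] at hy
            have : e ⟨x, hxs⟩ = e ⟨y, hys⟩ := Subtype.ext (hx.2.trans hy.2.symm)
            exact congrArg Subtype.val (e.injective this)
          · rw [dif_neg hys] at hy
            exact absurd hy.2.symm ha
        · rw [dif_neg hxs] at hx
          exact absurd hx.2.symm ha⟩, by
    ext x
    simp only [suppF, Finset.mem_filter, Finset.mem_univ, true_and]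
    constructor
    · intro hx
      by_contra hxs
      exact hx (dif_neg hxs)
    · intro hx
      rw [dif_pos hx]
      exact (e ⟨x, hx⟩).2⟩
  left_inv f := by
    apply Subtype.ext
    apply Subtype.ext
    funext x
    by_cases hx : x ∈ s
    · exact dif_pos hx
    · have h0 : f.1.1 x = 0 := by
        have : x ∉ suppF n k f.1 := f.2.symm ▸ hx
        simpa [suppF] using this
      exact (dif_neg hx).trans h0.symm
  right_inv e := by
    apply DFunLike.ext
    intro x
    apply Subtype.ext
    show (if hx : (x : Fin n) ∈ s then (e ⟨x, hx⟩).1 else 0) = (e x).1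
    rw [dif_pos x.2]

lemma fiber_card (n k : ℕ) (s : Finset (Fin n)) :
    Nat.card {f : {f : Fin n → Fin (n + 1) // cond n k f} // suppF n k f = s} =
      if n - k ≤ s.card then n.descFactorial s.card else 0 := by
  by_cases hs : n - k ≤ s.card
  · rw [if_pos hs, Nat.card_congr (fiberEquiv n k s hs), Nat.card_eq_fintype_card,
      Fintype.card_embedding_eq, card_nz, Fintype.card_coe]
  · rw [if_neg hs]
    have : IsEmpty {f : {f : Fin n → Fin (n + 1) // cond n k f} // suppF n k f = s} := by
      refine ⟨fun f => hs ?_⟩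
      have h0 := f.1.2.1
      rw [count_map_univ] at h0
      have hfil : (Finset.univ.filter (fun x => f.1.1 x = 0)) = (suppF n k f.1)ᶜ := by
        ext x
        simp [suppF]
      rw [hfil, f.2, Finset.card_compl, Fintype.card_fin] at h0
      have := Finset.card_le_univ s
      rw [Fintype.card_fin] at this
      omega
    exact Nat.card_of_isEmpty

lemma card_F (n k : ℕ) : Nat.card {f : Fin n → Fin (n + 1) // cond n k f} =
    ∑ s : Finset (Fin n), (if n - k ≤ s.card then n.descFactorial s.card else 0) := by
  rw [Nat.card_congr (Equiv.sigmaFiberEquiv (suppF n k)).symm, Nat.card_eq_fintype_card,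
    Fintype.card_sigma]
  exact Finset.sum_congr rfl fun s _ => by rw [← Nat.card_eq_fintype_card, fiber_card]

end FusedPermAux

namespace FusedPermAux

lemma sum_eval (n k : ℕ) :
    ∑ s : Finset (Fin n), (if n - k ≤ s.card then n.descFactorial s.card else 0) =
      ∑ i ∈ Finset.range (min k n + 1), n.choose i ^ 2 * (n - i).factorial := by
  rw [← Finset.powerset_univ, Finset.sum_powerset_apply_card
    (fun m => if n - k ≤ m then n.descFactorial m else 0), Finset.card_univ, Fintype.card_fin]
  have hstep : ∀ m ∈ Finset.range (n + 1),
      n.choose m • (if n - k ≤ m then n.descFactorial m else 0) =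
        if n - k ≤ m then n.choose m * n.descFactorial m else 0 := by
    intro m _
    split <;> simp
  rw [Finset.sum_congr rfl hstep, ← Finset.sum_filter]
  refine (Finset.sum_bij' (fun m _ => n - m) (fun i _ => n - i) ?_ ?_ ?_ ?_ ?_).symm
  · intro m hm
    simp only [Finset.mem_range] at hm
    simp only [Finset.mem_filter, Finset.mem_range]
    omega
  · intro i hi
    simp only [Finset.mem_filter, Finset.mem_range] at hi
    simp only [Finset.mem_range]
    omega
  · intro m hm
    simp only [Finset.mem_range] at hm
    omega
  · intro i hi
    simp only [Finset.mem_filter, Finset.mem_range] at hi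
    omega
  · intro m hm
    simp only [Finset.mem_range] at hm
    have hmn : m ≤ n := by omega
    rw [Nat.descFactorial_eq_factorial_mul_choose, Nat.choose_symm hmn]
    ring

end FusedPermAux

/-- A *fused permutation* in `S_{k,n}` is a sequence `(S₁, S₂, …, S_{n+1})` where `S₁` is a
multiset of `k` elements of `{1, …, n+1}` and `S₂, …, S_{n+1}` are singletons (encoded here as a
function `Fin n → Fin (n+1)`), such that the element `1` (here `0 : Fin (n+1)`) appears `k` times
in total and every other element appears exactly once in total.

The claim: the dimension of the fused permutations algebra `H_{k,n}`, i.e. the number of fused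
permutations, is `∑_{i=0}^{min(k,n)} (n choose i)² (n-i)!`. -/
theorem fused_permutations_card (n k : ℕ) (hk : 1 ≤ k) :
    Nat.card {p : Multiset (Fin (n + 1)) × (Fin n → Fin (n + 1)) //
        Multiset.card p.1 = k ∧
        (p.1 + Finset.univ.val.map p.2).count 0 = k ∧
        ∀ a : Fin (n + 1), a ≠ 0 → (p.1 + Finset.univ.val.map p.2).count a = 1} =
      ∑ i ∈ Finset.range (min k n + 1), n.choose i ^ 2 * (n - i).factorial := by
  rw [Nat.card_congr (FusedPermAux.equiv1 n k), FusedPermAux.card_F, FusedPermAux.sum_eval]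
end

section
/- The number of signed permutations in the hyperoctahedral group B_n that avoid the pattern \bar{1}\bar{2} (i.e., whose barred (negated) entries appear in decreasing order of absolute value when read left to right) equals sum over i from 0 to n of (n-i)! * binom(n,i)^2. -/
open Finset

/-- For a fixed set of barred positions `ε`, the number of permutations that are strictly
decreasing on the barred positions is `n.descFactorial (n - k)` where `k` is the number of
barred positions. -/
lemma card_decr_on (n : ℕ) (ε : Fin n → Bool) :
    Fintype.card {σ : Equiv.Perm (Fin n) //
        ∀ i j : Fin n, i < j → ε i = true → ε j = true → σ j < σ i} =
      n.descFactorial (n - (Finset.univ.filter (fun i => ε i = true)).card) := by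
  classical
  set A : Finset (Fin n) := Finset.univ.filter (fun i => ε i = true) with hA
  have hmemA : ∀ i : Fin n, i ∈ A ↔ ε i = true := by
    intro i; simp [hA]
  set k : ℕ := A.card with hk
  have hkn : k ≤ n := by
    calc k ≤ Fintype.card (Fin n) := A.card_le_univ
    _ = n := Fintype.card_fin n
  have hAc : (Aᶜ : Finset (Fin n)).card = n - k := by
    rw [Finset.card_compl, Fintype.card_fin]
  -- the forward map: restrict σ to the complement of A
  let F : {σ : Equiv.Perm (Fin n) //
      ∀ i j : Fin n, i < j → ε i = true → ε j = true → σ j < σ i} →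
      ((Aᶜ : Finset (Fin n)) ↪ Fin n) :=
    fun σ => ⟨fun x => σ.1 x.1, fun x y hxy => Subtype.ext (σ.1.injective hxy)⟩
  have hbij : Function.Bijective F := by
    constructor
    · -- injectivity
      rintro ⟨σ₁, h₁⟩ ⟨σ₂, h₂⟩ hF
      have hres : ∀ x : (Aᶜ : Finset (Fin n)), σ₁ x.1 = σ₂ x.1 := by
        intro x
        exact congrArg (fun (e : ((Aᶜ : Finset (Fin n)) ↪ Fin n)) => e x) hF
      -- the images of A under σ₁ and σ₂ agree
      have himg : ∀ σ : Equiv.Perm (Fin n), A.image σ = (Aᶜ.image σ)ᶜ := by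
        intro σ
        ext x
        simp only [Finset.mem_compl, Finset.mem_image]
        constructor
        · rintro ⟨a, ha, rfl⟩ ⟨b, hb, hba⟩
          exact hb (σ.injective hba ▸ ha)
        · intro hx
          refine ⟨σ.symm x, ?_, σ.apply_symm_apply x⟩
          by_contra hmem
          exact hx ⟨σ.symm x, hmem, σ.apply_symm_apply x⟩
      have himg12 : A.image σ₁ = A.image σ₂ := by
        rw [himg σ₁, himg σ₂]
        congr 1
        apply Finset.image_congr
        intro x hx
        exact hres ⟨x, hx⟩
      set C : Finset (Fin n) := A.image σ₁ with hC
      have hCcard : C.card = k := by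
        rw [hC, Finset.card_image_of_injective _ σ₁.injective]
      -- the increasing parametrizations of both restrictions agree
      have key : ∀ (σ : Equiv.Perm (Fin n)),
          (∀ i j : Fin n, i < j → ε i = true → ε j = true → σ j < σ i) →
          A.image σ = C →
          (fun j : Fin k => σ (A.orderEmbOfFin hk.symm j.rev)) = C.orderEmbOfFin hCcard := by
        intro σ hσ hACσ
        apply Finset.orderEmbOfFin_unique
        · intro x
          rw [← hACσ]
          exact Finset.mem_image_of_mem _ (Finset.orderEmbOfFin_mem _ _ _)
        · intro a b hab
          have h1 : b.rev < a.rev := by rwa [Fin.rev_lt_rev]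
          have h2 : A.orderEmbOfFin hk.symm b.rev < A.orderEmbOfFin hk.symm a.rev :=
            (A.orderEmbOfFin hk.symm).strictMono h1
          exact hσ _ _ h2 ((hmemA _).1 (Finset.orderEmbOfFin_mem _ _ _))
            ((hmemA _).1 (Finset.orderEmbOfFin_mem _ _ _))
      have hg : (fun j : Fin k => σ₁ (A.orderEmbOfFin hk.symm j.rev))
          = (fun j : Fin k => σ₂ (A.orderEmbOfFin hk.symm j.rev)) := by
        rw [key σ₁ h₁ rfl, key σ₂ h₂ himg12.symm]
      apply Subtype.ext
      apply Equiv.ext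
      intro x
      by_cases hx : x ∈ A
      · obtain ⟨j, hj⟩ : ∃ j, A.orderEmbOfFin hk.symm j = x := by
          have := Finset.range_orderEmbOfFin A hk.symm
          rw [Set.range_eq_iff] at this
          obtain ⟨-, h2⟩ := this
          exact h2 x hx
        have h1 := congrFun hg j.rev
        simpa [Fin.rev_rev, hj] using h1
      · exact hres ⟨x, Finset.mem_compl.2 hx⟩
    · -- surjectivity
      intro e
      set B : Finset (Fin n) := Finset.univ.map e with hB
      have hBcard : B.card = n - k := by
        rw [hB, Finset.card_map, Finset.card_univ, Fintype.card_coe, hAc]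
      have hCcard : (Bᶜ : Finset (Fin n)).card = k := by
        rw [Finset.card_compl, hBcard, Fintype.card_fin, Nat.sub_sub_self hkn]
      let f : Fin n → Fin n := fun x =>
        if h : x ∈ A then
          Bᶜ.orderEmbOfFin hCcard ((A.orderIsoOfFin hk.symm).symm ⟨x, h⟩).rev
        else e ⟨x, Finset.mem_compl.2 h⟩
      have hfA : ∀ x (h : x ∈ A),
          f x = Bᶜ.orderEmbOfFin hCcard ((A.orderIsoOfFin hk.symm).symm ⟨x, h⟩).rev := by
        intro x h; simp only [f, dif_pos h]
      have hfAc : ∀ x (h : x ∉ A), f x = e ⟨x, Finset.mem_compl.2 h⟩ := by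
        intro x h; simp only [f, dif_neg h]
      have hinj : Function.Injective f := by
        intro x y hxy
        by_cases hx : x ∈ A <;> by_cases hy : y ∈ A
        · rw [hfA x hx, hfA y hy] at hxy
          have h1 := (Bᶜ.orderEmbOfFin hCcard).injective hxy
          have h2 := Fin.rev_injective h1
          have h3 := (A.orderIsoOfFin hk.symm).symm.injective h2
          exact Subtype.ext_iff.1 h3
        · exfalso
          rw [hfA x hx, hfAc y hy] at hxy
          have hmem1 : f x ∈ Bᶜ := by
            rw [hfA x hx]; exact Finset.orderEmbOfFin_mem _ _ _
          have hmem2 : (e ⟨y, Finset.mem_compl.2 hy⟩ : Fin n) ∈ B := by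
            rw [hB]; exact Finset.mem_map_of_mem e (Finset.mem_univ _)
          rw [hfA x hx] at hmem1
          rw [hxy] at hmem1
          exact (Finset.mem_compl.1 hmem1) hmem2
        · exfalso
          rw [hfAc x hx, hfA y hy] at hxy
          have hmem1 : Bᶜ.orderEmbOfFin hCcard ((A.orderIsoOfFin hk.symm).symm ⟨y, hy⟩).rev ∈ Bᶜ :=
            Finset.orderEmbOfFin_mem _ _ _
          have hmem2 : (e ⟨x, Finset.mem_compl.2 hx⟩ : Fin n) ∈ B := by
            rw [hB]; exact Finset.mem_map_of_mem e (Finset.mem_univ _)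
          rw [← hxy] at hmem1
          exact (Finset.mem_compl.1 hmem1) hmem2
        · rw [hfAc x hx, hfAc y hy] at hxy
          have := e.injective hxy
          exact Subtype.ext_iff.1 this
      have hbijf : Function.Bijective f := Finite.injective_iff_bijective.1 hinj
      refine ⟨⟨Equiv.ofBijective f hbijf, ?_⟩, ?_⟩
      · intro i j hij hi hj
        have hiA : i ∈ A := (hmemA i).2 hi
        have hjA : j ∈ A := (hmemA j).2 hj
        show f j < f i
        rw [hfA i hiA, hfA j hjA]
        apply (Bᶜ.orderEmbOfFin hCcard).strictMono
        rw [Fin.rev_lt_rev]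
        have : ((⟨i, hiA⟩ : A) : {x // x ∈ A}) < ⟨j, hjA⟩ := by
          exact Subtype.mk_lt_mk.2 hij
        exact (OrderIso.lt_iff_lt _).2 this
      · apply Function.Embedding.ext
        intro x
        show f x.1 = e x
        have hx : x.1 ∉ A := Finset.mem_compl.1 x.2
        rw [hfAc x.1 hx]
  rw [Fintype.card_of_bijective hbij, Fintype.card_embedding_eq, Fintype.card_coe,
    Fintype.card_fin, hAc]

/-- A signed permutation of `{±1, …, ±n}` is encoded as a pair `(σ, ε)` where `σ ∈ S_n` gives the
absolute values `|b_i| = σ(i)` of the word `b_1 … b_n` and `ε i = true` means the entry `b_i` is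
barred (negative).  The word is `1̄2̄`-avoiding when the absolute values of the barred entries,
read from left to right, are strictly decreasing.

The claim: the number of `1̄2̄`-avoiding signed permutations in `B_n` is
`∑_{i=0}^{n} (n-i)! (n choose i)²`. -/
theorem card_bar12_avoiding (n : ℕ) :
    Nat.card {p : Equiv.Perm (Fin n) × (Fin n → Bool) //
        ∀ i j : Fin n, i < j → p.2 i = true → p.2 j = true → p.1 j < p.1 i} =
      ∑ i ∈ Finset.range (n + 1), (n - i).factorial * n.choose i ^ 2 := by
  classical
  rw [Nat.card_eq_fintype_card]
  -- split according to the Boolean vector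
  have E : {p : Equiv.Perm (Fin n) × (Fin n → Bool) //
        ∀ i j : Fin n, i < j → p.2 i = true → p.2 j = true → p.1 j < p.1 i} ≃
      Σ ε : Fin n → Bool, {σ : Equiv.Perm (Fin n) //
        ∀ i j : Fin n, i < j → ε i = true → ε j = true → σ j < σ i} :=
    { toFun := fun p => ⟨p.1.2, p.1.1, fun i j h h1 h2 => p.2 i j h h1 h2⟩
      invFun := fun q => ⟨(q.2.1, q.1), q.2.2⟩
      left_inv := fun p => rfl
      right_inv := fun q => rfl }
  rw [Fintype.card_congr E, Fintype.card_sigma]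
  have hterm : ∀ ε : Fin n → Bool,
      Fintype.card {σ : Equiv.Perm (Fin n) //
          ∀ i j : Fin n, i < j → ε i = true → ε j = true → σ j < σ i} =
        n.descFactorial (n - (Finset.univ.filter (fun i => ε i = true)).card) :=
    card_decr_on n
  calc (∑ ε : Fin n → Bool, Fintype.card {σ : Equiv.Perm (Fin n) //
          ∀ i j : Fin n, i < j → ε i = true → ε j = true → σ j < σ i})
      = ∑ ε : Fin n → Bool,
          n.descFactorial (n - (Finset.univ.filter (fun i => ε i = true)).card) := by
        exact Finset.sum_congr rfl (fun ε _ => hterm ε)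
    _ = ∑ A : Finset (Fin n), n.descFactorial (n - A.card) := by
        refine Fintype.sum_equiv
          ⟨fun ε => Finset.univ.filter (fun i => ε i = true),
           fun A => fun i => decide (i ∈ A), ?_, ?_⟩ _ _ (fun ε => rfl)
        · intro ε
          funext i
          by_cases h : ε i = true <;> simp [h]
        · intro A
          ext i
          simp
    _ = ∑ A ∈ (Finset.univ : Finset (Fin n)).powerset, n.descFactorial (n - A.card) := by
        rw [Finset.powerset_univ]
    _ = ∑ j ∈ Finset.range ((Finset.univ : Finset (Fin n)).card + 1),
          (Finset.univ : Finset (Fin n)).card.choose j • n.descFactorial (n - j) :=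
        Finset.sum_powerset_apply_card (x := (Finset.univ : Finset (Fin n)))
          (fun j => n.descFactorial (n - j))
    _ = ∑ j ∈ Finset.range (n + 1), n.choose j * n.descFactorial (n - j) := by
        simp [Finset.card_univ]
    _ = ∑ i ∈ Finset.range (n + 1), (n - i).factorial * n.choose i ^ 2 := by
        apply Finset.sum_congr rfl
        intro j hj
        have hjn : j ≤ n := Nat.lt_succ_iff.1 (Finset.mem_range.1 hj)
        rw [Nat.descFactorial_eq_factorial_mul_choose, Nat.choose_symm hjn]
        ring
end

section
/- The number of signed permutations in B_n that are \bar{1}\bar{2}-avoiding and have at most k barred entries equals sum over i from 0 to min(k,n) of binom(n,i)^2 * (n-i)!. -/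
/-!
Record the barred positions of a signed permutation as a set `S` and the absolute values as a
permutation `σ`; avoiding `1̄2̄` says exactly that `σ` is strictly decreasing on `S`. Such a `σ` is
determined by its restriction to the complement of `S`: the values left over for `S` must be placed
there in decreasing order. Conversely every injection of the complement into `[n]` extends in this
way, so for `|S| = i` there are `n! / i! = C(n, i) (n - i)!` such permutations, and summing over the
`C(n, i)` choices of `S` with `i ≤ k` gives the formula.
-/

open Equiv Finset
open scoped Nat

theorem StrictAntiOn.eqOn_of_image_eq {α β : Type*} [LinearOrder α] [Preorder β] {s : Set α}
    (hs : s.Finite) {f g : α → β} (hf : StrictAntiOn f s) (hg : StrictAntiOn g s)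
    (h : f '' s = g '' s) : s.EqOn f g := by
  have := hs.to_subtype
  have hfg : (fun a : s => f a) = fun a : s => g a :=
    ((Set.strictAntiOn_iff_strictAnti.mp hf).range_inj (Set.strictAntiOn_iff_strictAnti.mp hg)).mp
      (by simpa only [← Set.image_eq_range] using h)
  exact fun x hx => congrFun hfg ⟨x, hx⟩

section SubtypeCongr

variable {α : Type*} {p q : α → Prop} [DecidablePred p] [DecidablePred q]
  (e : {x // p x} ≃ {x // q x}) (f : {x // ¬p x} ≃ {x // ¬q x})

theorem Equiv.subtypeCongr_apply_of_pos {x : α} (hx : p x) :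
    e.subtypeCongr f x = e ⟨x, hx⟩ := by
  simp [Equiv.subtypeCongr, Equiv.sumCompl_symm_apply_of_pos hx]

theorem Equiv.subtypeCongr_apply_of_neg {x : α} (hx : ¬p x) :
    e.subtypeCongr f x = f ⟨x, hx⟩ := by
  simp [Equiv.subtypeCongr, Equiv.sumCompl_symm_apply_of_neg hx]

end SubtypeCongr

namespace Finset

variable {α : Type*} [LinearOrder α]

def antiEquivOfCardEq (s t : Finset α) (h : t.card = s.card) : s ≃ t :=
  (s.orderIsoOfFin rfl).symm.toEquiv.trans (Fin.revPerm.trans (t.orderIsoOfFin h).toEquiv)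

theorem strictAnti_antiEquivOfCardEq (s t : Finset α) (h : t.card = s.card) :
    StrictAnti fun x => (s.antiEquivOfCardEq t h x : α) := fun x y hxy => by
  simpa [antiEquivOfCardEq] using hxy

end Finset

theorem Equiv.Perm.eq_of_strictAntiOn_of_eqOn_compl {α : Type*} [LinearOrder α] {s : Set α}
    (hs : s.Finite) {σ τ : Perm α} (hσ : StrictAntiOn σ s) (hτ : StrictAntiOn τ s)
    (hout : Set.EqOn σ τ sᶜ) : σ = τ := by
  have himage : σ '' s = τ '' s := by
    rw [← compl_compl s, σ.image_compl, τ.image_compl, hout.image_eq]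
  have hin := hσ.eqOn_of_image_eq hs hτ himage
  ext x
  by_cases hx : x ∈ s
  · exact hin hx
  · exact hout hx

noncomputable def permStrictAntiOnEquivEmbedding {α : Type*} [LinearOrder α] [Fintype α]
    (s : Finset α) : {σ : Perm α // StrictAntiOn σ s} ≃ ({x // x ∉ s} ↪ α) :=
  Equiv.ofBijective (fun σ => (Function.Embedding.subtype _).trans σ.1.toEmbedding) <| by
    constructor
    · rintro ⟨σ, hσ⟩ ⟨τ, hτ⟩ h
      exact Subtype.ext <| σ.eq_of_strictAntiOn_of_eqOn_compl s.finite_toSet hσ hτ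
        fun x hx => DFunLike.congr_fun h ⟨x, hx⟩
    · intro e
      classical
      set t : Finset α := (univ.map e)ᶜ
      have ht : t.card = s.card := by
        have := s.card_le_univ
        simp only [t, card_compl, card_map, card_univ, Fintype.card_subtype_compl,
          Fintype.card_coe]
        omega
      let g : {x // x ∉ s} ≃ {x // x ∉ t} :=
        e.toEquivRange.trans (Equiv.subtypeEquivRight (by simp [t]))
      refine ⟨⟨Equiv.subtypeCongr (s.antiEquivOfCardEq t ht) g, fun x hx y hy hxy => ?_⟩, ?_⟩
      · simp only [Equiv.subtypeCongr_apply_of_pos _ _ hx, Equiv.subtypeCongr_apply_of_pos _ _ hy]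
        exact s.strictAnti_antiEquivOfCardEq t ht hxy
      · ext ⟨x, hx⟩
        simp [Equiv.subtypeCongr_apply_of_neg _ _ hx, g]

theorem card_perm_strictAntiOn {α : Type*} [LinearOrder α] [Fintype α] (s : Finset α) :
    Nat.card {σ : Perm α // StrictAntiOn σ s} =
      (Fintype.card α).choose s.card * (Fintype.card α - s.card)! := by
  classical
  rw [Nat.card_congr (permStrictAntiOnEquivEmbedding s), Nat.card_eq_fintype_card,
    Fintype.card_embedding_eq, Fintype.card_subtype_compl, Fintype.card_coe,
    Nat.descFactorial_eq_factorial_mul_choose, Nat.choose_symm s.card_le_univ, mul_comm]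

theorem Fintype.sum_finset_card_le_apply_card {α M : Type*} [Fintype α] [AddCommMonoid M]
    (k : ℕ) (f : ℕ → M) :
    ∑ s : {s : Finset α // s.card ≤ k}, f s.1.card =
      ∑ i ∈ range (min k (Fintype.card α) + 1), (Fintype.card α).choose i • f i := by
  classical
  have hrange : (range (Fintype.card α + 1)).filter (· ≤ k) =
      range (min k (Fintype.card α) + 1) := by
    ext i
    simp only [mem_filter, mem_range]
    omega
  refine (Finset.sum_subtype ((univ : Finset (Finset α)).filter fun s => s.card ≤ k) (by simp)
    (fun s => f s.card)).symm.trans ?_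
  rw [sum_filter, ← powerset_univ, sum_powerset_apply_card (fun m => if m ≤ k then f m else 0),
    card_univ, ← hrange, sum_filter]
  simp_rw [smul_ite, smul_zero]

def bar12AvoidingEquiv {α : Type*} [LinearOrder α] [Fintype α] (k : ℕ) :
    {p : Perm α × (α → Bool) //
        (∀ i j : α, i < j → p.2 i = true → p.2 j = true → p.1 j < p.1 i) ∧
        (univ.filter fun i => p.2 i = true).card ≤ k} ≃
      Σ s : {s : Finset α // s.card ≤ k}, {σ : Perm α // StrictAntiOn σ s} where
  toFun p := ⟨⟨univ.filter (p.1.2 · = true), p.2.2⟩,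
    ⟨p.1.1, fun i hi j hj hij => p.2.1 i j hij (by simpa using hi) (by simpa using hj)⟩⟩
  invFun q := ⟨(q.2.1, fun i => decide (i ∈ q.1.1)),
    fun i j hij hi hj => q.2.2 (by simpa using hi) (by simpa using hj) hij, by simpa using q.1.2⟩
  left_inv p := by ext i <;> simp
  right_inv q := Sigma.subtype_ext (Subtype.ext (by ext; simp)) rfl

/-- A signed permutation of `{±1, …, ±n}` is encoded as a pair `(σ, ε)` where `σ ∈ S_n` gives the
absolute values `|b_i| = σ(i)` and `ε i = true` means the `i`-th entry is barred (negative).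

The claim: the number of `1̄2̄`-avoiding signed permutations in `B_n` (barred absolute values
strictly decreasing from left to right) with at most `k` barred entries is
`∑_{i=0}^{min(k,n)} (n choose i)² (n-i)!`. -/
theorem card_bar12_avoiding_at_most_k_bars (n k : ℕ) :
    Nat.card {p : Equiv.Perm (Fin n) × (Fin n → Bool) //
        (∀ i j : Fin n, i < j → p.2 i = true → p.2 j = true → p.1 j < p.1 i) ∧
        (Finset.univ.filter fun i => p.2 i = true).card ≤ k} =
      ∑ i ∈ Finset.range (min k n + 1), n.choose i ^ 2 * (n - i).factorial := by
  rw [Nat.card_congr (bar12AvoidingEquiv k), Nat.card_sigma]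
  simp only [card_perm_strictAntiOn, Fintype.card_fin]
  rw [Fintype.sum_finset_card_le_apply_card k (fun i => n.choose i * (n - i)!), Fintype.card_fin]
  simp only [smul_eq_mul, sq, mul_assoc]
end

section
/- Let n ≤ k and let λ be a partition of k+n with λ_1 ≥ k. Then the number of semistandard Young tableaux of shape λ and weight (k,1,1,...,1) (with n ones) equals the number of standard bitableaux of shape ((λ_2,...,λ_p), (λ_1 - k)). -/
/-- The Young diagram obtained from `μ` by deleting its first row. -/
def ydTail (μ : YoungDiagram) : YoungDiagram where
  cells := μ.cells.filter fun c => (c.1 + 1, c.2) ∈ μ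
  isLowerSet := by
    rintro ⟨a1, a2⟩ ⟨b1, b2⟩ hba ha
    simp only [Finset.coe_filter, Set.mem_setOf_eq, YoungDiagram.mem_cells] at ha ⊢
    obtain ⟨h1, h2⟩ := Prod.mk_le_mk.mp hba
    exact ⟨μ.isLowerSet (Prod.mk_le_mk.mpr ⟨h1, h2⟩) ha.1,
      μ.isLowerSet (Prod.mk_le_mk.mpr ⟨by omega, h2⟩) ha.2⟩

/-- The one-row Young diagram with `a` boxes. -/
def ydRow (a : ℕ) : YoungDiagram where
  cells := (Finset.range a).image fun j => (0, j)
  isLowerSet := by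
    rintro ⟨a1, a2⟩ ⟨b1, b2⟩ hba ha
    simp only [Finset.coe_image, Finset.coe_range, Set.mem_image, Set.mem_Iio] at ha ⊢
    obtain ⟨h1, h2⟩ := Prod.mk_le_mk.mp hba
    obtain ⟨j, hj, hje⟩ := ha
    rw [Prod.ext_iff] at hje
    simp only at hje
    have hb1 : b1 = 0 := by omega
    subst hb1
    exact ⟨b2, by omega, rfl⟩

/-- The number of standard bitableaux of shape `(δ, μ)`: bijective fillings of the cells of the
two diagrams by `0, …, n-1` strictly increasing along rows and down columns of each diagram. -/
noncomputable def biStdCard (n : ℕ) (δ μ : YoungDiagram) : ℕ :=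
  Nat.card {f : ((δ.cells : Set (ℕ × ℕ)) ⊕ (μ.cells : Set (ℕ × ℕ))) ≃ Fin n //
    (∀ a b : (δ.cells : Set (ℕ × ℕ)),
      (a : ℕ × ℕ).1 ≤ (b : ℕ × ℕ).1 → (a : ℕ × ℕ).2 ≤ (b : ℕ × ℕ).2 → a ≠ b →
        f (Sum.inl a) < f (Sum.inl b)) ∧
    (∀ a b : (μ.cells : Set (ℕ × ℕ)),
      (a : ℕ × ℕ).1 ≤ (b : ℕ × ℕ).1 → (a : ℕ × ℕ).2 ≤ (b : ℕ × ℕ).2 → a ≠ b →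
        f (Sum.inr a) < f (Sum.inr b))}


lemma mem_ydTail {μ : YoungDiagram} {i j : ℕ} : (i, j) ∈ ydTail μ ↔ (i + 1, j) ∈ μ := by
  rw [← YoungDiagram.mem_cells]
  show _ ∈ Finset.filter _ _ ↔ _
  rw [Finset.mem_filter]
  constructor
  · exact fun h => h.2
  · intro h
    exact ⟨(YoungDiagram.mem_cells _).mpr (μ.up_left_mem (by omega) le_rfl h), h⟩

lemma mem_ydRow {a : ℕ} {c : ℕ × ℕ} : c ∈ ydRow a ↔ c.1 = 0 ∧ c.2 < a := by
  rw [← YoungDiagram.mem_cells, ydRow]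
  simp only [Finset.mem_image, Finset.mem_range]
  constructor
  · rintro ⟨j, hj, rfl⟩; exact ⟨rfl, hj⟩
  · rintro ⟨h0, h2⟩; exact ⟨c.2, h2, by rw [Prod.ext_iff]; exact ⟨h0.symm, rfl⟩⟩

lemma card_ydRow (a : ℕ) : (ydRow a).card = a := by
  rw [YoungDiagram.card, ydRow, Finset.card_image_of_injective, Finset.card_range]
  intro x y h; simpa using h

lemma card_ydTail (μ : YoungDiagram) : (ydTail μ).card + μ.rowLen 0 = μ.card := by
  classical
  have h1 : (ydTail μ).cells.image (fun c => (c.1 + 1, c.2)) =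
      μ.cells.filter (fun c => c.1 ≠ 0) := by
    ext ⟨i, j⟩
    simp only [Finset.mem_image, Finset.mem_filter, YoungDiagram.mem_cells]
    constructor
    · rintro ⟨⟨i', j'⟩, hc, hceq⟩
      obtain ⟨rfl, rfl⟩ : i' + 1 = i ∧ j' = j := Prod.mk.injEq .. ▸ by
        simpa [Prod.ext_iff] using hceq
      exact ⟨(mem_ydTail (μ := μ)).mp ((YoungDiagram.mem_cells _).mpr hc) , by omega⟩
    · rintro ⟨hm, hne⟩
      refine ⟨(i - 1, j), ?_, ?_⟩
      · rw [mem_ydTail]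
        have : i - 1 + 1 = i := by omega
        rwa [this]
      · simp [Prod.ext_iff]; omega
  have h2 : ((ydTail μ).cells.image (fun c : ℕ × ℕ => (c.1 + 1, c.2))).card =
      (ydTail μ).cells.card := by
    apply Finset.card_image_of_injective
    intro x y h
    rw [Prod.ext_iff] at h ⊢
    simp at h ⊢
    omega
  have h3 : (μ.cells.filter (fun c => c.1 = 0)) = μ.row 0 := by
    ext c
    simp [YoungDiagram.row, Finset.mem_filter, eq_comm]
  have h4 := Finset.card_filter_add_card_filter_not
    (s := μ.cells) (p := fun c : ℕ × ℕ => c.1 = 0)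
  have h5 : μ.rowLen 0 = (μ.row 0).card := YoungDiagram.rowLen_eq_card μ
  show (ydTail μ).cells.card + _ = μ.cells.card
  rw [← h2, h1, h5, ← h3]
  have : (Finset.filter (fun c : ℕ × ℕ => c.1 ≠ 0) μ.cells).card =
      (Finset.filter (fun a : ℕ × ℕ => ¬ a.1 = 0) μ.cells).card := rfl
  omega


lemma ssyt_entry_ge {μ : YoungDiagram} (T : SemistandardYoungTableau μ) :
    ∀ i j, (i, j) ∈ μ → i ≤ T i j := by
  intro i
  induction i with
  | zero => intro j _; omega
  | succ m ih =>
    intro j hm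
    have h1 : T m j < T (m + 1) j := T.col_strict (by omega) hm
    have h2 := ih j (μ.up_left_mem (by omega) le_rfl hm)
    omega

lemma ssyt_mono {μ : YoungDiagram} (T : SemistandardYoungTableau μ) {a1 a2 b1 b2 : ℕ}
    (h1 : a1 ≤ b1) (h2 : a2 ≤ b2) (hb : (b1, b2) ∈ μ) : T a1 a2 ≤ T b1 b2 :=
  le_trans (T.row_weak_of_le h2 (μ.up_left_mem h1 le_rfl hb)) (T.col_weak h1 hb)

lemma downclosed_eq_range {J : Finset ℕ} (h : ∀ j ∈ J, ∀ i, i ≤ j → i ∈ J) :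
    J = Finset.range J.card := by
  ext j
  rw [Finset.mem_range]
  constructor
  · intro hj
    have hsub : Finset.range (j + 1) ⊆ J := fun i hi =>
      h j hj i (by simpa [Nat.lt_succ_iff] using Finset.mem_range.mp hi)
    have := Finset.card_le_card hsub
    simp only [Finset.card_range] at this
    omega
  · intro hj
    by_contra hnj
    have hsub : J ⊆ Finset.range j := by
      intro x hx
      rw [Finset.mem_range]
      by_contra hxj
      exact hnj (h x hx j (by omega))
    have := Finset.card_le_card hsub
    simp only [Finset.card_range] at this
    omega

lemma zero_set {μ : YoungDiagram} (T : SemistandardYoungTableau μ) {k : ℕ}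
    (hrow : k ≤ μ.rowLen 0)
    (h0 : (μ.cells.filter fun c => T c.1 c.2 = 0).card = k) :
    (μ.cells.filter fun c => T c.1 c.2 = 0) =
      (Finset.range k).image fun j => (0, j) := by
  classical
  set S := μ.cells.filter fun c => T c.1 c.2 = 0 with hS
  have hfst : ∀ c ∈ S, c.1 = 0 := by
    rintro ⟨i, j⟩ hc
    obtain ⟨hm, hz⟩ := Finset.mem_filter.mp hc
    have := ssyt_entry_ge T i j (by simpa using hm)
    simp only at hz
    omega
  set J := S.image Prod.snd with hJ
  have hmemJ : ∀ j, j ∈ J ↔ (0, j) ∈ S := by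
    intro j
    rw [hJ, Finset.mem_image]
    constructor
    · rintro ⟨⟨i, j'⟩, hc, rfl⟩
      have := hfst _ hc
      simp only at this
      subst this
      exact hc
    · intro h
      exact ⟨(0, j), h, rfl⟩
  have hdc : ∀ j ∈ J, ∀ i, i ≤ j → i ∈ J := by
    intro j hj i hij
    rw [hmemJ] at hj ⊢
    obtain ⟨hm, hz⟩ := Finset.mem_filter.mp hj
    have hmem : (0, i) ∈ μ := μ.up_left_mem le_rfl hij (by simpa using hm)
    refine Finset.mem_filter.mpr ⟨by simpa using hmem, ?_⟩
    have := T.row_weak_of_le hij (by simpa using hm : ((0 : ℕ), j) ∈ μ)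
    simp only at hz ⊢
    omega
  have hcardJ : J.card = k := by
    rw [hJ, Finset.card_image_of_injOn, h0]
    rintro ⟨i, j⟩ hc ⟨i', j'⟩ hc' h
    have e1 := hfst _ hc
    have e2 := hfst _ hc'
    simp only at e1 e2 h
    simp [Prod.ext_iff, e1, e2, h]
  have hJr : J = Finset.range k := by rw [← hcardJ]; exact downclosed_eq_range hdc
  ext ⟨i, j⟩
  simp only [Finset.mem_image, Finset.mem_range]
  constructor
  · intro hc
    have := hfst _ hc
    simp only at this
    subst this
    have : j ∈ J := (hmemJ j).mpr hc
    rw [hJr, Finset.mem_range] at this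
    exact ⟨j, this, rfl⟩
  · rintro ⟨j', hj', hje⟩
    obtain ⟨rfl, rfl⟩ : (0 : ℕ) = i ∧ j' = j := by
      simpa [Prod.ext_iff] using hje
    exact (hmemJ j').mp (by rw [hJr, Finset.mem_range]; exact hj')

lemma entry_le_n {μ : YoungDiagram} (T : SemistandardYoungTableau μ) {n k : ℕ}
    (hcard : μ.card = k + n)
    (h0 : (μ.cells.filter fun c => T c.1 c.2 = 0).card = k)
    (h1 : ∀ a : ℕ, 1 ≤ a → a ≤ n → (μ.cells.filter fun c => T c.1 c.2 = a).card = 1) :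
    ∀ i j, (i, j) ∈ μ → T i j ≤ n := by
  classical
  set B := (Finset.range (n + 1)).biUnion
    (fun a => μ.cells.filter fun c => T c.1 c.2 = a) with hB
  have hdisj : ∀ a ∈ Finset.range (n+1), ∀ b ∈ Finset.range (n+1), a ≠ b →
      Disjoint (μ.cells.filter fun c => T c.1 c.2 = a)
        (μ.cells.filter fun c => T c.1 c.2 = b) := by
    intro a _ b _ hab
    rw [Finset.disjoint_filter]
    intro c _ hc1 hc2
    exact hab (hc1.symm.trans hc2)
  have hcardB : B.card = k + n := by
    rw [hB, Finset.card_biUnion hdisj]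
    rw [Finset.sum_range_succ']
    have : ∀ a ∈ Finset.range n,
        (μ.cells.filter fun c => T c.1 c.2 = (a + 1)).card = 1 := by
      intro a ha
      exact h1 (a + 1) (by omega) (by have := Finset.mem_range.mp ha; omega)
    rw [Finset.sum_congr rfl this, Finset.sum_const, Finset.card_range, h0,
      smul_eq_mul, mul_one]
    omega
  have hsub : B ⊆ μ.cells := by
    intro c hc
    obtain ⟨a, _, hc⟩ := Finset.mem_biUnion.mp hc
    exact (Finset.mem_filter.mp hc).1
  have hBeq : B = μ.cells := Finset.eq_of_subset_of_card_le hsub (by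
    rw [hcardB, ← hcard])
  intro i j hm
  have : (i, j) ∈ B := hBeq ▸ (by simpa using hm)
  obtain ⟨a, ha, hc⟩ := Finset.mem_biUnion.mp this
  have := (Finset.mem_filter.mp hc).2
  simp only at this
  rw [this]
  exact Nat.lt_succ_iff.mp (Finset.mem_range.mp ha)

lemma entry_unique {μ : YoungDiagram} (T : SemistandardYoungTableau μ) {n : ℕ} {a : ℕ}
    (h1 : ∀ a : ℕ, 1 ≤ a → a ≤ n → (μ.cells.filter fun c => T c.1 c.2 = a).card = 1)
    (ha1 : 1 ≤ a) (han : a ≤ n) {c c' : ℕ × ℕ} (hc : c ∈ μ) (hc' : c' ∈ μ)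
    (hv : T c.1 c.2 = a) (hv' : T c'.1 c'.2 = a) : c = c' := by
  have hcm : c ∈ μ.cells.filter fun c => T c.1 c.2 = a :=
    Finset.mem_filter.mpr ⟨by simpa using hc, hv⟩
  have hcm' : c' ∈ μ.cells.filter fun c => T c.1 c.2 = a :=
    Finset.mem_filter.mpr ⟨by simpa using hc', hv'⟩
  exact Finset.card_le_one.mp (le_of_eq (h1 a ha1 han)) c hcm c' hcm'

lemma rowLen1_le {μ : YoungDiagram} {n k : ℕ} (hcard : μ.card = k + n)
    (hrow : k ≤ μ.rowLen 0) : μ.rowLen 1 ≤ n := by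
  have hsub : μ.row 0 ∪ μ.row 1 ⊆ μ.cells := by
    intro c hc
    rcases Finset.mem_union.mp hc with h | h
    · exact Finset.mem_of_mem_filter c h
    · exact Finset.mem_of_mem_filter c h
  have hdisj : Disjoint (μ.row 0) (μ.row 1) := by
    rw [YoungDiagram.row_eq_prod, YoungDiagram.row_eq_prod]
    simp [Finset.disjoint_left]
  have := Finset.card_le_card hsub
  rw [Finset.card_union_of_disjoint hdisj, ← YoungDiagram.rowLen_eq_card,
    ← YoungDiagram.rowLen_eq_card] at this
  have : μ.rowLen 0 + μ.rowLen 1 ≤ μ.card := this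
  omega

section Construction

variable {n k : ℕ} {μ : YoungDiagram}

abbrev SumCells (k : ℕ) (μ : YoungDiagram) :=
  (((ydTail μ).cells : Set (ℕ × ℕ))) ⊕ (((ydRow (μ.rowLen 0 - k)).cells : Set (ℕ × ℕ)))

lemma mem_tail_coe {c : ℕ × ℕ} :
    c ∈ (((ydTail μ).cells : Set (ℕ × ℕ))) ↔ (c.1 + 1, c.2) ∈ μ := by
  rw [Finset.mem_coe, YoungDiagram.mem_cells]
  exact mem_ydTail

lemma mem_row_coe {c : ℕ × ℕ} :
    c ∈ (((ydRow (μ.rowLen 0 - k)).cells : Set (ℕ × ℕ))) ↔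
      c.1 = 0 ∧ c.2 < μ.rowLen 0 - k := by
  rw [Finset.mem_coe, YoungDiagram.mem_cells]
  exact mem_ydRow

/-- The entry function built from a bitableau filling. -/
def fillEntry (n k : ℕ) (μ : YoungDiagram) (e : SumCells k μ → Fin n) : ℕ → ℕ → ℕ :=
  fun i j =>
    if i = 0 then
      if h : k ≤ j ∧ (0, j) ∈ μ then
        (e (Sum.inr ⟨(0, j - k), mem_row_coe.mpr
          ⟨rfl, by have := YoungDiagram.mem_iff_lt_rowLen.mp h.2; omega⟩⟩) : ℕ) + 1
      else 0
    else
      if h : (i - 1, j) ∈ ydTail μ then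
        (e (Sum.inl ⟨(i - 1, j), mem_tail_coe.mpr (by
          have hi : i - 1 + 1 = i ∨ i = 0 := by omega
          exact mem_ydTail.mp h)⟩) : ℕ) + 1
      else 0

lemma fillEntry_tail (e : SumCells k μ → Fin n) {i j : ℕ} (h : (i, j) ∈ ydTail μ) :
    fillEntry n k μ e (i + 1) j = (e (Sum.inl ⟨(i, j), mem_tail_coe.mpr (mem_ydTail.mp h)⟩) : ℕ) + 1 := by
  rw [fillEntry]
  have h1 : ¬ (i + 1 = 0) := by omega
  rw [if_neg h1]
  have h2 : (i + 1 - 1, j) ∈ ydTail μ := by simpa using h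
  rw [dif_pos h2]
  congr 2

lemma fillEntry_rowpart (e : SumCells k μ → Fin n) {j : ℕ} (hkj : k ≤ j) (hm : (0, j) ∈ μ) :
    fillEntry n k μ e 0 j = (e (Sum.inr ⟨(0, j - k), mem_row_coe.mpr
      ⟨rfl, by have := YoungDiagram.mem_iff_lt_rowLen.mp hm; omega⟩⟩) : ℕ) + 1 := by
  rw [fillEntry, if_pos rfl, dif_pos ⟨hkj, hm⟩]

lemma fillEntry_zero (e : SumCells k μ → Fin n) {j : ℕ} (hkj : j < k) :
    fillEntry n k μ e 0 j = 0 := by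
  rw [fillEntry, if_pos rfl, dif_neg (by omega)]

/-- The SSYT built from a strict bitableau filling. -/
def fillSSYT (n k : ℕ) (μ : YoungDiagram) (hnk : n ≤ k) (hcard : μ.card = k + n)
    (hrow : k ≤ μ.rowLen 0)
    (e : SumCells k μ → Fin n)
    (he1 : ∀ a b : (((ydTail μ).cells : Set (ℕ × ℕ))),
      (a : ℕ × ℕ).1 ≤ (b : ℕ × ℕ).1 → (a : ℕ × ℕ).2 ≤ (b : ℕ × ℕ).2 → a ≠ b →
        e (Sum.inl a) < e (Sum.inl b))
    (he2 : ∀ a b : (((ydRow (μ.rowLen 0 - k)).cells : Set (ℕ × ℕ))),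
      (a : ℕ × ℕ).1 ≤ (b : ℕ × ℕ).1 → (a : ℕ × ℕ).2 ≤ (b : ℕ × ℕ).2 → a ≠ b →
        e (Sum.inr a) < e (Sum.inr b)) :
    SemistandardYoungTableau μ where
  entry := fillEntry n k μ e
  row_weak' := by
    intro i j1 j2 hj hm
    rcases Nat.eq_zero_or_pos i with rfl | hi
    · by_cases h1 : k ≤ j1
      · have hm1 : (0, j1) ∈ μ := μ.up_left_mem le_rfl (by omega) hm
        rw [fillEntry_rowpart e h1 hm1, fillEntry_rowpart e (by omega) hm]
        have := he2 ⟨(0, j1 - k), mem_row_coe.mpr ⟨rfl, by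
            have := YoungDiagram.mem_iff_lt_rowLen.mp hm1; omega⟩⟩
          ⟨(0, j2 - k), mem_row_coe.mpr ⟨rfl, by
            have := YoungDiagram.mem_iff_lt_rowLen.mp hm; omega⟩⟩
          le_rfl (by simp; omega) (by simp [Subtype.ext_iff, Prod.ext_iff]; omega)
        simp only [Fin.lt_iff_val_lt_val] at this
        omega
      · rw [fillEntry_zero e (by omega)]
        omega
    · have hine : ¬ (i = 0) := by omega
      obtain ⟨m, rfl⟩ : ∃ m, i = m + 1 := ⟨i - 1, by omega⟩
      have hm2 : (m, j2) ∈ ydTail μ := mem_ydTail.mpr hm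
      have hm1 : (m, j1) ∈ ydTail μ := (ydTail μ).up_left_mem le_rfl (by omega) hm2
      rw [fillEntry_tail e hm1, fillEntry_tail e hm2]
      have := he1 ⟨(m, j1), mem_tail_coe.mpr (mem_ydTail.mp hm1)⟩
        ⟨(m, j2), mem_tail_coe.mpr (mem_ydTail.mp hm2)⟩
        le_rfl (by simp; omega) (by simp [Subtype.ext_iff, Prod.ext_iff]; omega)
      simp only [Fin.lt_iff_val_lt_val] at this
      omega
  col_strict' := by
    intro i1 i2 j hi hm
    obtain ⟨m, rfl⟩ : ∃ m, i2 = m + 1 := ⟨i2 - 1, by omega⟩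
    have hm2 : (m, j) ∈ ydTail μ := mem_ydTail.mpr hm
    rw [fillEntry_tail e hm2]
    rcases Nat.eq_zero_or_pos i1 with rfl | hi1
    · -- top entry is in row 0; it must be a zero entry since j < k
      have hjk : j < k := by
        have h1m : (1, j) ∈ μ := μ.up_left_mem (by omega) le_rfl hm
        have : j < μ.rowLen 1 := YoungDiagram.mem_iff_lt_rowLen.mp h1m
        have h2 := rowLen1_le hcard hrow
        omega
      rw [fillEntry_zero e hjk]
      omega
    · obtain ⟨m1, rfl⟩ : ∃ m1, i1 = m1 + 1 := ⟨i1 - 1, by omega⟩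
      have hm1 : (m1, j) ∈ ydTail μ := (ydTail μ).up_left_mem (by omega) le_rfl hm2
      rw [fillEntry_tail e hm1]
      have := he1 ⟨(m1, j), mem_tail_coe.mpr (mem_ydTail.mp hm1)⟩
        ⟨(m, j), mem_tail_coe.mpr (mem_ydTail.mp hm2)⟩
        (by simp; omega) le_rfl (by simp [Subtype.ext_iff, Prod.ext_iff]; omega)
      simp only [Fin.lt_iff_val_lt_val] at this
      omega
  zeros' := by
    intro i j hm
    rcases Nat.eq_zero_or_pos i with rfl | hi
    · rw [fillEntry, if_pos rfl, dif_neg (by tauto)]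
    · rw [fillEntry, if_neg (by omega), dif_neg]
      intro hc
      have := mem_ydTail.mp hc
      have hi1 : i - 1 + 1 = i := by omega
      rw [hi1] at this
      exact hm this

end Construction

section Counts

variable {n k : ℕ} {μ : YoungDiagram}

/-- The cell of `μ` corresponding to a cell of the bitableau. -/
def cellOf (k : ℕ) (μ : YoungDiagram) : SumCells k μ → ℕ × ℕ :=
  Sum.elim (fun c => ((c : ℕ × ℕ).1 + 1, (c : ℕ × ℕ).2))
    (fun c => (0, k + (c : ℕ × ℕ).2))

lemma cellOf_mem (hrow : k ≤ μ.rowLen 0) (s : SumCells k μ) : cellOf k μ s ∈ μ := by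
  rcases s with c | c
  · exact mem_tail_coe.mp c.2
  · obtain ⟨h0, h2⟩ := mem_row_coe.mp c.2
    show (0, k + (c : ℕ × ℕ).2) ∈ μ
    rw [YoungDiagram.mem_iff_lt_rowLen]
    omega

lemma cellOf_inj : Function.Injective (cellOf k μ) := by
  rintro (a | a) (b | b) h <;> simp only [cellOf, Sum.elim_inl, Sum.elim_inr, Prod.ext_iff] at h
  · obtain ⟨h1, h2⟩ := h
    rw [Sum.inl.injEq]
    apply Subtype.ext
    rw [Prod.ext_iff]
    exact ⟨by omega, h2⟩
  · omega
  · omega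
  · obtain ⟨h1, h2⟩ := h
    rw [Sum.inr.injEq]
    apply Subtype.ext
    rw [Prod.ext_iff]
    have ha := (mem_row_coe.mp a.2).1
    have hb := (mem_row_coe.mp b.2).1
    exact ⟨ha.trans hb.symm, by omega⟩

lemma fillEntry_cellOf (e : SumCells k μ → Fin n) (hrow : k ≤ μ.rowLen 0) (s : SumCells k μ) :
    fillEntry n k μ e (cellOf k μ s).1 (cellOf k μ s).2 = (e s : ℕ) + 1 := by
  rcases s with c | c
  · obtain ⟨⟨i, j⟩, hc⟩ := c
    have ht : (i, j) ∈ ydTail μ := by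
      rw [← YoungDiagram.mem_cells, ← Finset.mem_coe]; exact hc
    show fillEntry n k μ e (i + 1) j = _
    rw [fillEntry_tail e ht]
  · obtain ⟨⟨i, j⟩, hc⟩ := c
    obtain ⟨h0, h2⟩ := mem_row_coe.mp hc
    simp only at h0 h2
    subst h0
    show fillEntry n k μ e 0 (k + j) = _
    have hm : (0, k + j) ∈ μ := by rw [YoungDiagram.mem_iff_lt_rowLen]; omega
    rw [fillEntry_rowpart e (by omega) hm]
    have : ((0 : ℕ), k + j - k) = ((0 : ℕ), j) := by
      rw [Prod.mk.injEq]; exact ⟨rfl, by omega⟩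
    congr 2
    exact congrArg _ (congrArg Sum.inr (Subtype.ext this))

lemma fillEntry_eq_iff (e : SumCells k μ → Fin n) (hrow : k ≤ μ.rowLen 0) {i j a : ℕ}
    (hm : (i, j) ∈ μ) (ha : 1 ≤ a) (hv : fillEntry n k μ e i j = a) :
    ∃ s : SumCells k μ, cellOf k μ s = (i, j) ∧ (e s : ℕ) + 1 = a := by
  rcases Nat.eq_zero_or_pos i with rfl | hi
  · by_cases h1 : k ≤ j
    · rw [fillEntry_rowpart e h1 hm] at hv
      refine ⟨Sum.inr ⟨(0, j - k), mem_row_coe.mpr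
        ⟨rfl, by have := YoungDiagram.mem_iff_lt_rowLen.mp hm; omega⟩⟩, ?_, hv⟩
      show (0, k + (j - k)) = ((0 : ℕ), j)
      rw [Prod.ext_iff]
      exact ⟨rfl, by omega⟩
    · rw [fillEntry_zero e (by omega)] at hv
      omega
  · obtain ⟨m, rfl⟩ : ∃ m, i = m + 1 := ⟨i - 1, by omega⟩
    have ht : (m, j) ∈ ydTail μ := mem_ydTail.mpr hm
    rw [fillEntry_tail e ht] at hv
    exact ⟨Sum.inl ⟨(m, j), mem_tail_coe.mpr (mem_ydTail.mp ht)⟩, rfl, hv⟩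

lemma fill_filter_zero (e : SumCells k μ → Fin n) (hrow : k ≤ μ.rowLen 0) :
    (μ.cells.filter fun c => fillEntry n k μ e c.1 c.2 = 0) =
      (Finset.range k).image fun j => (0, j) := by
  ext ⟨i, j⟩
  rw [Finset.mem_filter, Finset.mem_image]
  constructor
  · rintro ⟨hm, hz⟩
    rw [YoungDiagram.mem_cells] at hm
    simp only at hz
    rcases Nat.eq_zero_or_pos i with rfl | hi
    · by_cases h1 : k ≤ j
      · rw [fillEntry_rowpart e h1 hm] at hz; omega
      · exact ⟨j, Finset.mem_range.mpr (by omega), rfl⟩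
    · obtain ⟨m, rfl⟩ : ∃ m, i = m + 1 := ⟨i - 1, by omega⟩
      rw [fillEntry_tail e (mem_ydTail.mpr hm)] at hz
      omega
  · rintro ⟨j', hj', hje⟩
    obtain ⟨rfl, rfl⟩ : (0 : ℕ) = i ∧ j' = j := by simpa [Prod.ext_iff] using hje
    rw [Finset.mem_range] at hj'
    refine ⟨?_, ?_⟩
    · rw [YoungDiagram.mem_cells, YoungDiagram.mem_iff_lt_rowLen]; omega
    · exact fillEntry_zero e hj'

lemma fill_filter_val (e : SumCells k μ ≃ Fin n) (hrow : k ≤ μ.rowLen 0) {a : ℕ}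
    (ha1 : 1 ≤ a) (han : a ≤ n) :
    (μ.cells.filter fun c => fillEntry n k μ (⇑e) c.1 c.2 = a) =
      {cellOf k μ (e.symm ⟨a - 1, by omega⟩)} := by
  ext ⟨i, j⟩
  rw [Finset.mem_filter, Finset.mem_singleton]
  constructor
  · rintro ⟨hm, hv⟩
    rw [YoungDiagram.mem_cells] at hm
    simp only at hv
    obtain ⟨s, hs, hse⟩ := fillEntry_eq_iff (⇑e) hrow hm ha1 hv
    have : e s = ⟨a - 1, by omega⟩ := by
      apply Fin.ext
      show (e s : ℕ) = a - 1
      omega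
    rw [← hs, ← this, Equiv.symm_apply_apply]
  · intro h
    have hmem : cellOf k μ (e.symm ⟨a - 1, by omega⟩) ∈ μ := cellOf_mem hrow _
    have hval := fillEntry_cellOf (⇑e) hrow (e.symm ⟨a - 1, by omega⟩)
    rw [Equiv.apply_symm_apply] at hval
    rw [h]
    refine ⟨(YoungDiagram.mem_cells _).mpr hmem, ?_⟩
    show fillEntry n k μ (⇑e) _ _ = a
    rw [hval, Fin.val_mk]
    omega

end Counts



section Main

variable {n k : ℕ} {μ : YoungDiagram}

lemma fillSSYT_coe (hnk : n ≤ k) (hcard : μ.card = k + n) (hrow : k ≤ μ.rowLen 0)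
    (e : SumCells k μ → Fin n) (he1) (he2) :
    ⇑(fillSSYT n k μ hnk hcard hrow e he1 he2) = fillEntry n k μ e := rfl

lemma card_sumCells (hcard : μ.card = k + n) (hrow : k ≤ μ.rowLen 0) :
    Fintype.card (SumCells k μ) = n := by
  rw [Fintype.card_sum]
  have h1 : Fintype.card (((ydTail μ).cells : Set (ℕ × ℕ))) = (ydTail μ).cells.card :=
    (Fintype.card_congr (Equiv.subtypeEquivRight fun x => Finset.mem_coe)).trans
      (Fintype.card_coe _)
  have h2 : Fintype.card (((ydRow (μ.rowLen 0 - k)).cells : Set (ℕ × ℕ))) =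
      (ydRow (μ.rowLen 0 - k)).cells.card :=
    (Fintype.card_congr (Equiv.subtypeEquivRight fun x => Finset.mem_coe)).trans
      (Fintype.card_coe _)
  have h3 := card_ydTail μ
  have h4 := card_ydRow (μ.rowLen 0 - k)
  rw [h1, h2]
  show (ydTail μ).card + (ydRow (μ.rowLen 0 - k)).card = n
  omega

theorem ssyt_weight_card_eq_biStdCard' (n k : ℕ) (hnk : n ≤ k) (μ : YoungDiagram)
    (hcard : μ.card = k + n) (hrow : k ≤ μ.rowLen 0) :
    Nat.card {T : SemistandardYoungTableau μ //
        (μ.cells.filter fun c => T c.1 c.2 = 0).card = k ∧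
        ∀ a : ℕ, 1 ≤ a → a ≤ n → (μ.cells.filter fun c => T c.1 c.2 = a).card = 1} =
      biStdCard n (ydTail μ) (ydRow (μ.rowLen 0 - k)) := by
  classical
  rw [biStdCard]
  have hz : ∀ (f : SumCells k μ ≃ Fin n) he1 he2,
      (μ.cells.filter fun c =>
        (fillSSYT n k μ hnk hcard hrow (⇑f) he1 he2) c.1 c.2 = 0).card = k := by
    intro f he1 he2
    show (μ.cells.filter fun c => fillEntry n k μ (⇑f) c.1 c.2 = 0).card = k
    rw [fill_filter_zero (⇑f) hrow,
      Finset.card_image_of_injective _ (fun x y h => by simpa using h), Finset.card_range]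
  have hv : ∀ (f : SumCells k μ ≃ Fin n) he1 he2, ∀ a : ℕ, 1 ≤ a → a ≤ n →
      (μ.cells.filter fun c =>
        (fillSSYT n k μ hnk hcard hrow (⇑f) he1 he2) c.1 c.2 = a).card = 1 := by
    intro f he1 he2 a ha1 han
    show (μ.cells.filter fun c => fillEntry n k μ (⇑f) c.1 c.2 = a).card = 1
    rw [fill_filter_val f hrow ha1 han, Finset.card_singleton]
  refine (Nat.card_congr (Equiv.ofBijective
    (fun fp => ⟨fillSSYT n k μ hnk hcard hrow (⇑fp.1) fp.2.1 fp.2.2,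
      hz fp.1 fp.2.1 fp.2.2, hv fp.1 fp.2.1 fp.2.2⟩) ⟨?_, ?_⟩)).symm
  · -- injective
    rintro ⟨f, hf1, hf2⟩ ⟨f', hf1', hf2'⟩ h
    have hT : fillEntry n k μ ⇑f = fillEntry n k μ ⇑f' := by
      have := Subtype.ext_iff.mp h
      simp only at this
      exact congrArg DFunLike.coe this
    apply Subtype.ext
    show f = f'
    apply Equiv.ext
    intro s
    apply Fin.ext
    have h1 := fillEntry_cellOf (⇑f) hrow s
    have h2 := fillEntry_cellOf (⇑f') hrow s
    have h3 := congrFun (congrFun hT (cellOf k μ s).1) (cellOf k μ s).2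
    rw [h1, h2] at h3
    omega
  · -- surjective
    rintro ⟨T, hT0, hT1⟩
    have hzs := zero_set T hrow hT0
    have hle := entry_le_n T hcard hT0 hT1
    have hb : ∀ s : SumCells k μ,
        1 ≤ T (cellOf k μ s).1 (cellOf k μ s).2 ∧ T (cellOf k μ s).1 (cellOf k μ s).2 ≤ n := by
      intro s
      refine ⟨?_, hle _ _ (cellOf_mem hrow s)⟩
      rcases s with c | c
      · have := ssyt_entry_ge T ((c : ℕ × ℕ).1 + 1) (c : ℕ × ℕ).2 (cellOf_mem hrow (Sum.inl c))
        show 1 ≤ T ((c : ℕ × ℕ).1 + 1) (c : ℕ × ℕ).2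
        omega
      · show 1 ≤ T 0 (k + (c : ℕ × ℕ).2)
        by_contra hcon
        have hz : T 0 (k + (c : ℕ × ℕ).2) = 0 := by omega
        have hmem : ((0 : ℕ), k + (c : ℕ × ℕ).2) ∈
            μ.cells.filter fun c => T c.1 c.2 = 0 := by
          refine Finset.mem_filter.mpr ⟨?_, hz⟩
          exact (YoungDiagram.mem_cells _).mpr (cellOf_mem hrow (Sum.inr c))
        rw [hzs] at hmem
        obtain ⟨j', hj', hje⟩ := Finset.mem_image.mp hmem
        rw [Finset.mem_range] at hj'
        have : j' = k + (c : ℕ × ℕ).2 := by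
          have := (Prod.ext_iff.mp hje).2; simpa using this
        omega
    set g : SumCells k μ → Fin n := fun s =>
      ⟨T (cellOf k μ s).1 (cellOf k μ s).2 - 1, by have := hb s; omega⟩ with hg
    have hstrict : ∀ s s' : SumCells k μ, (cellOf k μ s).1 ≤ (cellOf k μ s').1 →
        (cellOf k μ s).2 ≤ (cellOf k μ s').2 → s ≠ s' →
        T (cellOf k μ s).1 (cellOf k μ s).2 < T (cellOf k μ s').1 (cellOf k μ s').2 := by
      intro s s' h1 h2 hne
      have hle' := ssyt_mono T h1 h2 (cellOf_mem hrow s')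
      have hneq : T (cellOf k μ s).1 (cellOf k μ s).2 ≠
          T (cellOf k μ s').1 (cellOf k μ s').2 := by
        intro heq
        have hbs' := hb s'
        exact hne (cellOf_inj (entry_unique T hT1 hbs'.1 hbs'.2
          (cellOf_mem hrow s) (cellOf_mem hrow s') heq rfl))
      omega
    have ginj : Function.Injective g := by
      intro s s' hgs
      have hval : T (cellOf k μ s).1 (cellOf k μ s).2 =
          T (cellOf k μ s').1 (cellOf k μ s').2 := by
        have := Fin.val_eq_of_eq hgs
        have hbs := hb s
        have hbs' := hb s'
        simp only [hg] at this
        omega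
      have hbs' := hb s'
      exact cellOf_inj (entry_unique T hT1 hbs'.1 hbs'.2
        (cellOf_mem hrow s) (cellOf_mem hrow s') hval rfl)
    have hbij : Function.Bijective g :=
      (Fintype.bijective_iff_injective_and_card g).mpr
        ⟨ginj, by rw [card_sumCells hcard hrow, Fintype.card_fin]⟩
    set E := Equiv.ofBijective g hbij with hE
    have hEg : ∀ s, E s = g s := fun s => rfl
    have he1 : ∀ a b : (((ydTail μ).cells : Set (ℕ × ℕ))),
        (a : ℕ × ℕ).1 ≤ (b : ℕ × ℕ).1 → (a : ℕ × ℕ).2 ≤ (b : ℕ × ℕ).2 → a ≠ b →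
          E (Sum.inl a) < E (Sum.inl b) := by
      intro a b h1 h2 hne
      have := hstrict (Sum.inl a) (Sum.inl b)
        (by show (a : ℕ × ℕ).1 + 1 ≤ (b : ℕ × ℕ).1 + 1; omega)
        (by show (a : ℕ × ℕ).2 ≤ (b : ℕ × ℕ).2; exact h2) (by simpa using hne)
      rw [hEg, hEg, Fin.lt_iff_val_lt_val]
      have hba := hb (Sum.inl a)
      have hbb := hb (Sum.inl b)
      show T (cellOf k μ (Sum.inl a)).1 (cellOf k μ (Sum.inl a)).2 - 1 <
        T (cellOf k μ (Sum.inl b)).1 (cellOf k μ (Sum.inl b)).2 - 1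
      omega
    have he2 : ∀ a b : (((ydRow (μ.rowLen 0 - k)).cells : Set (ℕ × ℕ))),
        (a : ℕ × ℕ).1 ≤ (b : ℕ × ℕ).1 → (a : ℕ × ℕ).2 ≤ (b : ℕ × ℕ).2 → a ≠ b →
          E (Sum.inr a) < E (Sum.inr b) := by
      intro a b h1 h2 hne
      have := hstrict (Sum.inr a) (Sum.inr b) (by show (0 : ℕ) ≤ (0 : ℕ); omega)
        (by show k + (a : ℕ × ℕ).2 ≤ k + (b : ℕ × ℕ).2; omega) (by simpa using hne)
      rw [hEg, hEg, Fin.lt_iff_val_lt_val]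
      have hba := hb (Sum.inr a)
      have hbb := hb (Sum.inr b)
      show T (cellOf k μ (Sum.inr a)).1 (cellOf k μ (Sum.inr a)).2 - 1 <
        T (cellOf k μ (Sum.inr b)).1 (cellOf k μ (Sum.inr b)).2 - 1
      omega
    refine ⟨⟨E, he1, he2⟩, ?_⟩
    apply Subtype.ext
    show fillSSYT n k μ hnk hcard hrow (⇑E) he1 he2 = T
    apply SemistandardYoungTableau.ext
    intro i j
    show fillEntry n k μ (⇑E) i j = T i j
    rcases Nat.eq_zero_or_pos i with rfl | hi
    · by_cases hm : (0, j) ∈ μ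
      · by_cases hk : k ≤ j
        · have hps : ((0 : ℕ), j - k) ∈ (((ydRow (μ.rowLen 0 - k)).cells : Set (ℕ × ℕ))) :=
            mem_row_coe.mpr ⟨rfl, by
              have := YoungDiagram.mem_iff_lt_rowLen.mp hm; omega⟩
          have hfc := fillEntry_cellOf (⇑E) hrow (Sum.inr ⟨(0, j - k), hps⟩)
          have hbv := hb (Sum.inr ⟨(0, j - k), hps⟩)
          simp only [cellOf, Sum.elim_inr] at hfc hbv
          have hEv : (E (Sum.inr ⟨(0, j - k), hps⟩) : ℕ) =
              T 0 (k + (j - k)) - 1 := rfl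
          rw [hEv] at hfc
          have hj : k + (j - k) = j := by omega
          rw [hj] at hfc hbv
          omega
        · rw [fillEntry_zero (⇑E) (by omega)]
          have hmem : ((0 : ℕ), j) ∈ μ.cells.filter fun c => T c.1 c.2 = 0 := by
            rw [hzs, Finset.mem_image]
            exact ⟨j, Finset.mem_range.mpr (by omega), rfl⟩
          exact ((Finset.mem_filter.mp hmem).2).symm
      · rw [fillEntry, if_pos rfl, dif_neg (by tauto), T.zeros hm]
    · obtain ⟨m, rfl⟩ : ∃ m, i = m + 1 := ⟨i - 1, by omega⟩
      by_cases hm : (m + 1, j) ∈ μ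
      · have hps : ((m : ℕ), j) ∈ (((ydTail μ).cells : Set (ℕ × ℕ))) :=
          mem_tail_coe.mpr hm
        have hfc := fillEntry_cellOf (⇑E) hrow (Sum.inl ⟨(m, j), hps⟩)
        have hbv := hb (Sum.inl ⟨(m, j), hps⟩)
        simp only [cellOf, Sum.elim_inl] at hfc hbv
        have hEv : (E (Sum.inl ⟨(m, j), hps⟩) : ℕ) = T (m + 1) j - 1 := rfl
        rw [hEv] at hfc
        omega
      · rw [fillEntry, if_neg (by omega), dif_neg (by
          intro hc
          have := mem_ydTail.mp hc
          have hi1 : m + 1 - 1 + 1 = m + 1 := by omega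
          rw [hi1] at this
          exact hm this), T.zeros hm]

end Main

/-- Let `n ≤ k` and let `λ` be a partition of `k+n` with `λ₁ ≥ k`.  Then the number of
semistandard Young tableaux of shape `λ` and weight `(k, 1, …, 1)` — here with the alphabet
`{1, …, n+1}` encoded as `{0, …, n}`, so the entry `0` appears `k` times and each entry
`1, …, n` appears exactly once — equals the number of standard bitableaux of shape
`((λ₂, …, λ_p), (λ₁ - k))`. -/
theorem ssyt_weight_card_eq_biStdCard (n k : ℕ) (hnk : n ≤ k) (μ : YoungDiagram)
    (hcard : μ.card = k + n) (hrow : k ≤ μ.rowLen 0) :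
    Nat.card {T : SemistandardYoungTableau μ //
        (μ.cells.filter fun c => T c.1 c.2 = 0).card = k ∧
        ∀ a : ℕ, 1 ≤ a → a ≤ n → (μ.cells.filter fun c => T c.1 c.2 = a).card = 1} =
      biStdCard n (ydTail μ) (ydRow (μ.rowLen 0 - k)) := by
  exact ssyt_weight_card_eq_biStdCard' n k hnk μ hcard hrow
end

section
/- In the degenerate cyclotomic affine Hecke algebra Ĥ_n^κ, set x_{r+1} = s_r x_r s_r + s_r recursively. Then the elements x_1, ..., x_n pairwise commute. -/
/-- Key algebraic step: if `a` commutes with `t`, `s` and `t` are involutions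
satisfying the braid relation, and `a` commutes with `s*a*s + s`, then
`s*a*s + s` commutes with `t*(s*a*s+s)*t + t`. -/
theorem jm_step {A : Type*} [Ring A] (a s t : A)
    (hat : t * a = a * t) (hs : s * s = 1) (ht : t * t = 1)
    (hbr : s * t * s = t * s * t)
    (hrel : a * (s*a*s + s) = (s*a*s + s) * a) :
    (s*a*s+s) * (t*(s*a*s+s)*t + t) = (t*(s*a*s+s)*t + t) * (s*a*s+s) := by
  have h1 : s*a*s*t*s*a*s*t = s*t*a*s*a*s*t*s := by
    linear_combination (norm := noncomm_ring)
      (s*a)*hbr*(a*s*t) - s*hat*(s*t*a*s*t) + (s*t*a*s)*hat*(s*t) - (s*t*a*s*a)*hbr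
  have h2 : t*s*a*s*t*s*a*s = s*t*s*a*s*a*t*s := by
    linear_combination (norm := noncomm_ring)
      (t*s*a)*hbr*(a*s) - (t*s)*hat*(s*t*a*s) - hbr*(a*s*t*a*s) + (s*t*s*a*s)*hat*s
  have h3 : s*a*s*t*s*t = s*t*a*s := by
    linear_combination (norm := noncomm_ring)
      (s*a)*hbr*t + (s*a*t*s)*ht - s*hat*s
  have h4 : t*s*t*s*a*s = s*t*a*s := by
    linear_combination (norm := noncomm_ring) - hbr*(s*a*s) + (s*t)*hs*(a*s)
  have h5 : s*t*s*a*s*t = t*s*a*s*t*s := by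
    linear_combination (norm := noncomm_ring)
      hbr*(a*s*t) + (t*s)*hat*(s*t) - (t*s*a)*hbr
  have h6 : s*t*s*t = t*s := by
    linear_combination (norm := noncomm_ring) hbr*t + (t*s)*ht
  have h7 : t*s*t*s = s*t := by
    linear_combination (norm := noncomm_ring) - hbr*s + (s*t)*hs
  have h9 : s*t*a*s*t*s = s*a*s*t := by
    linear_combination (norm := noncomm_ring)
      s*hat*(s*t*s) - (s*a)*hbr*s + (s*a*s*t)*hs
  have h10 : s*t*s*a*t*s = t*s*a*s := by
    linear_combination (norm := noncomm_ring)
      hbr*(a*t*s) + (t*s)*hat*(t*s) + (t*s*a)*ht*s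
  linear_combination (norm := noncomm_ring)
    h1 - h2 + h3 - h4 + h5 + h6 - h7 + (s*t)*hrel*(t*s) - h9 + h10

/-- In the degenerate cyclotomic affine Hecke algebra `Ĥ_n^κ` (presented by generators
`x = x₁` and `s 1, …, s (n-1)` and the defining relations, stated for any unital associative
`ℂ`-algebra containing such elements), the Jucys–Murphy elements defined recursively by
`x_{r+1} = s_r x_r s_r + s_r` pairwise commute. -/
theorem degenerate_hecke_JM_commute {A : Type*} [Ring A] [Algebra ℂ A] (n : ℕ)
    (κ₁ κ₂ : ℂ) (x : A) (s : ℕ → A)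
    (hcyclo : (x - algebraMap ℂ A κ₁) * (x - algebraMap ℂ A κ₂) = 0)
    (hxs : ∀ l, 2 ≤ l → l ≤ n - 1 → x * s l = s l * x)
    (hxsx : x * (s 1 * x * s 1 + s 1) = (s 1 * x * s 1 + s 1) * x)
    (hinv : ∀ k, 1 ≤ k → k ≤ n - 1 → s k * s k = 1)
    (hcomm : ∀ k m, 1 ≤ k → 1 ≤ m → k ≤ n - 1 → m ≤ n - 1 → k + 1 < m →
      s k * s m = s m * s k)
    (hbraid : ∀ k, 1 ≤ k → k + 1 ≤ n - 1 →
      s k * s (k + 1) * s k = s (k + 1) * s k * s (k + 1))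
    (X : ℕ → A) (hX1 : X 1 = x)
    (hXrec : ∀ r, 1 ≤ r → r ≤ n - 1 → X (r + 1) = s r * X r * s r + s r) :
    ∀ r t, 1 ≤ r → r ≤ n → 1 ≤ t → t ≤ n → X r * X t = X t * X r := by
  -- s l commutes with X r whenever r < l ≤ n-1
  have L1 : ∀ r, 1 ≤ r → ∀ l, r < l → l ≤ n - 1 → s l * X r = X r * s l := by
    intro r hr
    induction r, hr using Nat.le_induction with
    | base =>
      intro l hl hln
      rw [hX1]
      exact (hxs l hl hln).symm
    | succ r hr IH =>
      intro l hl hln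
      rw [hXrec r hr (by omega)]
      have c1 : s l * s r = s r * s l := (hcomm r l hr (by omega) (by omega) hln (by omega)).symm
      have c2 : s l * X r = X r * s l := IH l (by omega) hln
      linear_combination (norm := noncomm_ring)
        c1*(X r * s r) + s r * c2 * s r + (s r * X r)*c1 + c1
  -- neighbouring JM elements commute
  have L2 : ∀ r, 1 ≤ r → r + 1 ≤ n → X r * X (r+1) = X (r+1) * X r := by
    intro r hr
    induction r, hr using Nat.le_induction with
    | base =>
      intro h2n
      rw [hXrec 1 le_rfl (by omega), hX1]
      exact hxsx
    | succ r hr IH =>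
      intro hstep
      have e1 := hXrec r hr (by omega)
      have e2 := hXrec (r+1) (by omega) (by omega)
      have hat : s (r+1) * X r = X r * s (r+1) := L1 r hr (r+1) (by omega) (by omega)
      have hrel : X r * (s r * X r * s r + s r) = (s r * X r * s r + s r) * X r := by
        rw [← e1]; exact IH (by omega)
      have key := jm_step (X r) (s r) (s (r+1)) hat (hinv r hr (by omega))
        (hinv (r+1) (by omega) (by omega)) (hbraid r hr (by omega)) hrel
      rw [e2, e1]
      exact key
  -- general case r < t
  have L3 : ∀ r, 1 ≤ r → ∀ t, r < t → t ≤ n → X r * X t = X t * X r := by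
    intro r hr t ht
    induction t, ht using Nat.le_induction with
    | base =>
      intro htn
      exact L2 r hr htn
    | succ t htge IH =>
      intro htn
      rw [hXrec t (by omega) (by omega)]
      have d1 : X r * s t = s t * X r := (L1 r hr t (by omega) (by omega)).symm
      have d2 : X r * X t = X t * X r := IH (by omega)
      linear_combination (norm := noncomm_ring)
        d1*(X t * s t) + s t * d2 * s t + (s t * X t)*d1 + d1
  intro r t hr hrn ht htn
  rcases lt_trichotomy r t with h | h | h
  · exact L3 r hr t h htn
  · rw [h]
  · exact (L3 t ht r h hrn).symm
end

section
/- Let k ≥ 2, and work in the fused permutations algebra H_{k,n} (n ≥ 2). Let σ_0 be the diagram where one edge leaves the top ellipse to the first free point and the first free top point connects into the bottom ellipse (all else identity), and σ_1 the diagram crossing the first two free strands. Then σ_0 σ_1 σ_0 = (1/k) σ_1 σ_0 σ_1 + ((k-1)/k) h_2, where h_2 is the diagram with two edges from the top ellipse to the first two free bottom points and two edges from the first two free top points to the bottom ellipse. Equivalently, under the isomorphism with P_k C[S_{k+n}] P_k (P_k the symmetrizer on the first k points), this is an identity among the elements P_k δ_k P_k, P_k δ_{k+1} P_k and their products. -/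
/-!
Write `a : Fin k ↪ Fin (k + n)` for the inclusion, `B = k`, `C = k + 1`, `s_i = (a i, B)` and
`T = (B, C)`, so that `σ₀ = P s_y P` with `y = k - 1` and `σ₁ = P T P`.
Since `T` commutes with `S_k`, `σ₁ = T P = P T`, hence `σ₀ σ₁ σ₀ = P s_y T P s_y P`.
Expanding the middle `P` and moving each `w ∈ S_k` through `s_y` (which it conjugates to
`s_{w y}`) into the right-hand `P` gives `(1/k!) ∑_w P s_y T s_{w y} P`.
The `(k-1)!` permutations with `w y = y` contribute `P (a y, C) P = σ₁ σ₀ σ₁`.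
For `j ≠ y`, `s_y T s_j = (a y, a j) (a y, B) (a j, C)`; the first factor is absorbed by `P`,
and since `S_k` is 2-transitive, `P (a i, B) (a j, C) P` is the same for all ordered pairs
`i ≠ j`, namely `h₂`.
-/

/-- The symmetrizer `P_k = (1/k!) ∑_{w ∈ S_k} w`, viewed inside the complex group algebra
`ℂ[S_{k+n}]` via the standard inclusion `S_k ⊂ S_{k+n}` (acting on the first `k` letters). -/
noncomputable def symmetrizer (k n : ℕ) : MonoidAlgebra ℂ (Equiv.Perm (Fin (k + n))) :=
  ((k.factorial : ℂ))⁻¹ • ∑ w : Equiv.Perm (Fin k),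
    MonoidAlgebra.of ℂ (Equiv.Perm (Fin (k + n)))
      (w.viaEmbedding (Fin.castLEEmb (Nat.le_add_right k n)))

open Equiv Finset MonoidAlgebra

namespace Equiv.Perm

variable {α β : Type*} [DecidableEq α]

theorem exists_apply_eq_and_apply_eq {a b c d : α} (hab : a ≠ b) (hcd : c ≠ d) :
    ∃ u : Perm α, u a = c ∧ u b = d := by
  have hc : swap a c a ≠ swap a c b := (swap a c).injective.ne hab
  rw [swap_apply_left] at hc
  exact ⟨swap (swap a c b) d * swap a c, by simp [mul_apply, swap_apply_of_ne_of_ne hc hcd],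
    by simp [mul_apply]⟩

theorem card_filter_apply_eq_self [Fintype α] (a : α) :
    #{w : Perm α | w a = a} = (Fintype.card α - 1).factorial := by
  have h := Fintype.card_congr (Perm.subtypeEquivSubtypePerm (· ≠ a))
  rw [Fintype.card_perm, Fintype.card_subtype_compl, Fintype.card_subtype_eq] at h
  rw [h, ← Fintype.card_subtype]
  exact Fintype.card_congr (subtypeEquivRight fun w => by simp)

theorem swap_mul_swap_mul_swap_eq_swap_mul_swap_mul_swap {p q b c : α} (hpq : p ≠ q)
    (hqb : q ≠ b) (hqc : q ≠ c) (hbc : b ≠ c) :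
    swap p b * swap b c * swap q b = swap p q * swap p b * swap q c := by
  ext x
  simp only [Perm.mul_apply, swap_apply_def]
  split_ifs <;> simp_all

variable [DecidableEq β] (e : α ↪ β)

theorem viaEmbedding_swap (i j : α) : (swap i j).viaEmbedding e = swap (e i) (e j) := by
  ext x
  by_cases hx : x ∈ Set.range e
  · obtain ⟨l, rfl⟩ := hx
    rw [viaEmbedding_apply, e.injective.swap_apply]
  · rw [viaEmbedding_apply_of_notMem _ _ _ hx, swap_apply_of_ne_of_ne
      (fun h => hx ⟨i, h.symm⟩) (fun h => hx ⟨j, h.symm⟩)]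

omit [DecidableEq α] in
theorem viaEmbedding_mul_swap_mul_inv (w : Perm α) (i : α) {b : β} (hb : b ∉ Set.range e) :
    w.viaEmbedding e * swap (e i) b * (w.viaEmbedding e)⁻¹ = swap (e (w i)) b := by
  rw [← swap_apply_apply, viaEmbedding_apply, viaEmbedding_apply_of_notMem _ _ _ hb]

omit [DecidableEq α] in
theorem commute_swap_viaEmbedding (w : Perm α) {b c : β} (hb : b ∉ Set.range e)
    (hc : c ∉ Set.range e) : Commute (swap b c) (w.viaEmbedding e) := by
  have h := swap_apply_apply (w.viaEmbedding e) b c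
  rw [viaEmbedding_apply_of_notMem _ _ _ hb, viaEmbedding_apply_of_notMem _ _ _ hc] at h
  exact (mul_inv_eq_iff_eq_mul.mp h.symm).symm

end Equiv.Perm

theorem Fin.notMem_range_castAddEmb {k n : ℕ} {b : Fin (k + n)} (hb : k ≤ b) :
    b ∉ Set.range (Fin.castAddEmb n) := by
  rintro ⟨i, rfl⟩
  exact (Nat.lt_of_lt_of_le i.isLt hb).false

section Symmetrizer

variable {k n : ℕ}

theorem symmetrizer_eq_smul_sum : symmetrizer k n =
    ((k.factorial : ℂ))⁻¹ • ∑ w : Perm (Fin k), of ℂ _ (w.viaEmbedding (Fin.castAddEmb n)) :=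
  rfl

theorem symmetrizer_mul_of_viaEmbedding (w : Perm (Fin k)) :
    symmetrizer k n * of ℂ _ (w.viaEmbedding (Fin.castAddEmb n)) = symmetrizer k n := by
  rw [symmetrizer_eq_smul_sum, smul_mul_assoc, sum_mul]
  congr 1
  simp_rw [← map_mul, ← Perm.viaEmbeddingHom_apply, ← map_mul]
  exact Fintype.sum_equiv (Equiv.mulRight w) _ _ fun _ => rfl

theorem of_viaEmbedding_mul_symmetrizer (w : Perm (Fin k)) :
    of ℂ _ (w.viaEmbedding (Fin.castAddEmb n)) * symmetrizer k n = symmetrizer k n := by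
  rw [symmetrizer_eq_smul_sum, mul_smul_comm, mul_sum]
  congr 1
  simp_rw [← map_mul, ← Perm.viaEmbeddingHom_apply, ← map_mul]
  exact Fintype.sum_equiv (Equiv.mulLeft w) _ _ fun _ => rfl

theorem mul_symmetrizer_mul (x y : MonoidAlgebra ℂ (Perm (Fin (k + n)))) :
    x * symmetrizer k n * y =
      ((k.factorial : ℂ))⁻¹ • ∑ w : Perm (Fin k),
        x * of ℂ _ (w.viaEmbedding (Fin.castAddEmb n)) * y := by
  rw [symmetrizer_eq_smul_sum, mul_smul_comm, smul_mul_assoc, mul_sum, sum_mul]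

theorem symmetrizer_mul_self : symmetrizer k n * symmetrizer k n = symmetrizer k n := by
  rw [← one_mul (symmetrizer k n * _), ← mul_assoc, mul_symmetrizer_mul]
  simp_rw [one_mul, of_viaEmbedding_mul_symmetrizer, sum_const, card_univ, Fintype.card_perm,
    Fintype.card_fin, ← Nat.cast_smul_eq_nsmul ℂ, smul_smul]
  rw [inv_mul_cancel₀ (by exact_mod_cast k.factorial_ne_zero), one_smul]

theorem symmetrizer_mul_symmetrizer_mul (x : MonoidAlgebra ℂ (Perm (Fin (k + n)))) :
    symmetrizer k n * (symmetrizer k n * x) = symmetrizer k n * x := by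
  rw [← mul_assoc, symmetrizer_mul_self]

theorem commute_of_symmetrizer {g : Perm (Fin (k + n))}
    (hg : ∀ w : Perm (Fin k), Commute g (w.viaEmbedding (Fin.castAddEmb n))) :
    Commute (of ℂ _ g) (symmetrizer k n) := by
  rw [symmetrizer_eq_smul_sum]
  exact (Commute.sum_right _ _ _ fun w _ => (hg w).map (of ℂ _)).smul_right _

/-- `P g P`, the element of `H_{k,n} = P ℂ[S_{k+n}] P` represented by the permutation `g`. -/
noncomputable def symmetrize (k n : ℕ) (g : Perm (Fin (k + n))) :
    MonoidAlgebra ℂ (Perm (Fin (k + n))) :=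
  symmetrizer k n * of ℂ _ g * symmetrizer k n

theorem symmetrize_viaEmbedding_mul (w : Perm (Fin k)) (g : Perm (Fin (k + n))) :
    symmetrize k n (w.viaEmbedding (Fin.castAddEmb n) * g) = symmetrize k n g := by
  simp only [symmetrize, map_mul, ← mul_assoc, symmetrizer_mul_of_viaEmbedding]

theorem symmetrize_mul_viaEmbedding (w : Perm (Fin k)) (g : Perm (Fin (k + n))) :
    symmetrize k n (g * w.viaEmbedding (Fin.castAddEmb n)) = symmetrize k n g := by
  simp only [symmetrize, map_mul, mul_assoc, of_viaEmbedding_mul_symmetrizer]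

theorem symmetrize_conj (w : Perm (Fin k)) (g : Perm (Fin (k + n))) :
    symmetrize k n (MulAut.conj (w.viaEmbedding (Fin.castAddEmb n)) g) = symmetrize k n g := by
  have hinv : (w.viaEmbedding (Fin.castAddEmb n))⁻¹ = w⁻¹.viaEmbedding (Fin.castAddEmb n) :=
    (map_inv (Perm.viaEmbeddingHom _) w).symm
  rw [MulAut.conj_apply, hinv, symmetrize_mul_viaEmbedding, symmetrize_viaEmbedding_mul]

variable {B C : Fin (k + n)} (hB : B ∉ Set.range (Fin.castAddEmb n))
  (hC : C ∉ Set.range (Fin.castAddEmb n))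

include hB hC

theorem symmetrizer_mul_of_swap_mul (x : MonoidAlgebra ℂ (Perm (Fin (k + n)))) :
    symmetrizer k n * (of ℂ _ (swap B C) * x) = of ℂ _ (swap B C) * (symmetrizer k n * x) := by
  rw [← mul_assoc, ← (commute_of_symmetrizer fun w =>
    Perm.commute_swap_viaEmbedding _ w hB hC).eq, mul_assoc]

theorem symmetrize_swap_mul_swap {i j i' j' : Fin k} (hij : i ≠ j) (hij' : i' ≠ j') :
    symmetrize k n (swap (Fin.castAddEmb n i) B * swap (Fin.castAddEmb n j) C) =
      symmetrize k n (swap (Fin.castAddEmb n i') B * swap (Fin.castAddEmb n j') C) := by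
  obtain ⟨u, rfl, rfl⟩ := Perm.exists_apply_eq_and_apply_eq hij hij'
  rw [← symmetrize_conj u, map_mul, MulAut.conj_apply, MulAut.conj_apply,
    Perm.viaEmbedding_mul_swap_mul_inv _ _ _ hB, Perm.viaEmbedding_mul_swap_mul_inv _ _ _ hC]

theorem symmetrize_swap_mul_swap_mul_swap (hBC : B ≠ C) {x y : Fin k} (hxy : x ≠ y)
    (j : Fin k) :
    symmetrize k n (swap (Fin.castAddEmb n y) B * swap B C * swap (Fin.castAddEmb n j) B) =
      if j = y then symmetrize k n (swap (Fin.castAddEmb n y) C)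
      else symmetrize k n (swap (Fin.castAddEmb n x) B * swap (Fin.castAddEmb n y) C) := by
  have hjC : Fin.castAddEmb n j ≠ C := fun h => hC ⟨j, h⟩
  split_ifs with hjy
  · subst hjy
    have h := swap_apply_apply (swap (Fin.castAddEmb n j) B) B C
    rw [swap_apply_right, swap_apply_of_ne_of_ne hjC.symm hBC.symm, swap_inv] at h
    rw [← h]
  · have hyj : y ≠ j := Ne.symm hjy
    rw [Perm.swap_mul_swap_mul_swap_eq_swap_mul_swap_mul_swap
      ((Fin.castAddEmb n).injective.ne hyj) (fun h => hB ⟨j, h⟩) hjC hBC, mul_assoc,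
      ← Perm.viaEmbedding_swap, symmetrize_viaEmbedding_mul,
      symmetrize_swap_mul_swap hB hC hyj hxy]

theorem symmetrize_mul_symmetrize_mul_symmetrize_eq_symmetrize (y : Fin k) :
    symmetrize k n (swap B C) * symmetrize k n (swap (Fin.castAddEmb n y) B) *
      symmetrize k n (swap B C) = symmetrize k n (swap (Fin.castAddEmb n y) C) := by
  have h := swap_apply_apply (swap B C) (Fin.castAddEmb n y) B
  rw [swap_apply_left, swap_apply_of_ne_of_ne (fun h => hB ⟨y, h⟩) (fun h => hC ⟨y, h⟩),
    swap_inv] at h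
  rw [h]
  simp only [symmetrize, map_mul, mul_assoc, symmetrizer_mul_symmetrizer_mul,
    symmetrizer_mul_self, symmetrizer_mul_of_swap_mul hB hC]

theorem symmetrize_mul_symmetrize_mul_symmetrize_eq_sum (y : Fin k) :
    symmetrize k n (swap (Fin.castAddEmb n y) B) * symmetrize k n (swap B C) *
        symmetrize k n (swap (Fin.castAddEmb n y) B) =
      ((k.factorial : ℂ))⁻¹ • ∑ w : Perm (Fin k), symmetrize k n
        (swap (Fin.castAddEmb n y) B * swap B C * swap (Fin.castAddEmb n (w y)) B) := by
  rw [show symmetrize k n (swap (Fin.castAddEmb n y) B) * symmetrize k n (swap B C) *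
        symmetrize k n (swap (Fin.castAddEmb n y) B) =
      symmetrizer k n * of ℂ _ (swap (Fin.castAddEmb n y) B) * of ℂ _ (swap B C) *
        symmetrizer k n * (of ℂ _ (swap (Fin.castAddEmb n y) B) * symmetrizer k n) by
    simp only [symmetrize, mul_assoc, symmetrizer_mul_symmetrizer_mul,
      symmetrizer_mul_of_swap_mul hB hC], mul_symmetrizer_mul]
  refine congrArg _ (sum_congr rfl fun w _ => ?_)
  have hw : w.viaEmbedding (Fin.castAddEmb n) * swap (Fin.castAddEmb n y) B =
      swap (Fin.castAddEmb n (w y)) B * w.viaEmbedding (Fin.castAddEmb n) :=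
    mul_inv_eq_iff_eq_mul.mp (Perm.viaEmbedding_mul_swap_mul_inv _ w y hB)
  calc _ = symmetrize k n (swap (Fin.castAddEmb n y) B * swap B C *
        (w.viaEmbedding (Fin.castAddEmb n) * swap (Fin.castAddEmb n y) B)) := by
        simp only [symmetrize, map_mul, mul_assoc]
    _ = _ := by rw [hw, ← mul_assoc, symmetrize_mul_viaEmbedding]

theorem symmetrize_mul_symmetrize_mul_symmetrize_eq_smul_add_smul (hBC : B ≠ C) {x y : Fin k}
    (hxy : x ≠ y) :
    symmetrize k n (swap (Fin.castAddEmb n y) B) * symmetrize k n (swap B C) *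
        symmetrize k n (swap (Fin.castAddEmb n y) B) =
      (k : ℂ)⁻¹ • (symmetrize k n (swap B C) * symmetrize k n (swap (Fin.castAddEmb n y) B) *
        symmetrize k n (swap B C)) +
      (((k : ℂ) - 1) / k) •
        symmetrize k n (swap (Fin.castAddEmb n x) B * swap (Fin.castAddEmb n y) C) := by
  rw [symmetrize_mul_symmetrize_mul_symmetrize_eq_sum hB hC,
    symmetrize_mul_symmetrize_mul_symmetrize_eq_symmetrize hB hC,
    sum_congr rfl fun w _ => symmetrize_swap_mul_swap_mul_swap hB hC hBC hxy (w y), sum_ite,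
    sum_const, sum_const, Perm.card_filter_apply_eq_self]
  have hk : (k : ℂ) ≠ 0 := Nat.cast_ne_zero.mpr x.pos.ne'
  have hfact : (k.factorial : ℂ) = k * (k - 1).factorial := by
    exact_mod_cast (Nat.mul_factorial_pred x.pos.ne').symm
  have hpred : ((k - 1).factorial : ℂ) ≠ 0 := Nat.cast_ne_zero.mpr (k - 1).factorial_ne_zero
  have hcard : (#{w : Perm (Fin k) | ¬w y = y} : ℂ) = k.factorial - (k - 1).factorial := by
    have h := card_filter_add_card_filter_not (s := univ) fun w : Perm (Fin k) => w y = y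
    rw [Perm.card_filter_apply_eq_self, card_univ, Fintype.card_perm, Fintype.card_fin] at h
    rw [eq_sub_iff_add_eq']
    exact_mod_cast h
  rw [Fintype.card_fin, ← Nat.cast_smul_eq_nsmul ℂ, ← Nat.cast_smul_eq_nsmul ℂ, hcard, smul_add,
    smul_smul, smul_smul, hfact]
  congr 2 <;> field_simp

end Symmetrizer

/-- In `H_{k,n} = P_k ℂ[S_{k+n}] P_k` with `k ≥ 2` and `n ≥ 2`, setting
`σ₀ = P_k δ_k P_k`, `σ₁ = P_k δ_{k+1} P_k`, and
`h₂ = P_k w P_k` where `w = (k-1, k+1)(k, k+2)` (1-based) is a permutation representing the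
diagram with two edges from the top ellipse to the first two free bottom points and two edges
from the first two free top points into the bottom ellipse, we have
`σ₀ σ₁ σ₀ = (1/k) σ₁ σ₀ σ₁ + ((k-1)/k) h₂`. -/
theorem sigma0_sigma1_sigma0 (k n : ℕ) (hk : 2 ≤ k) (hn : 2 ≤ n) :
    let P := symmetrizer k n
    let σ₀ := P * MonoidAlgebra.of ℂ (Equiv.Perm (Fin (k + n)))
      (Equiv.swap (⟨k - 1, by omega⟩ : Fin (k + n)) ⟨k, by omega⟩) * P
    let σ₁ := P * MonoidAlgebra.of ℂ (Equiv.Perm (Fin (k + n)))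
      (Equiv.swap (⟨k, by omega⟩ : Fin (k + n)) ⟨k + 1, by omega⟩) * P
    let h₂ := P * MonoidAlgebra.of ℂ (Equiv.Perm (Fin (k + n)))
      (Equiv.swap (⟨k - 2, by omega⟩ : Fin (k + n)) ⟨k, by omega⟩ *
        Equiv.swap (⟨k - 1, by omega⟩ : Fin (k + n)) ⟨k + 1, by omega⟩) * P
    σ₀ * σ₁ * σ₀ = (k : ℂ)⁻¹ • (σ₁ * σ₀ * σ₁) + (((k : ℂ) - 1) / (k : ℂ)) • h₂ := by
  intro P σ₀ σ₁ h₂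
  exact symmetrize_mul_symmetrize_mul_symmetrize_eq_smul_add_smul
    (B := ⟨k, by omega⟩) (C := ⟨k + 1, by omega⟩) (Fin.notMem_range_castAddEmb le_rfl)
    (Fin.notMem_range_castAddEmb (Nat.le_succ k)) (by simp [Fin.ext_iff])
    (x := ⟨k - 2, by omega⟩) (y := ⟨k - 1, by omega⟩) (by simp [Fin.ext_iff]; omega)
end
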